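/- arXiv:1609.03537 — 6 statements merged into one kernel-verified Lean document; each statement's English description precedes it below -/
import Mathlib

section
/- Let C be a finite set of m candidates, N = {1,…,n} voters with rank functions rank_i : C → {1,…,m} forming a single-peaked profile (there is a linear order ◁ on C such that every set {c : rank_i(c) ≤ r} is an interval of ◁), let k ≤ m, let α_1 ≥ … ≥ α_k ≥ 0 and w_1 ≥ … ≥ w_m ≥ 0 be rationals, and set w'_r = w_r − w_{r+1} for r < m and w'_m = w_m. Then the supremum of ∑_{i∈N} ∑_{ℓ=1}^{k} ∑_{r=1}^{m} α_ℓ·w'_r·x_{i,ℓ,r} over all rational y ∈ [0,1]^C and x ∈ [0,1]^{N×{1,…,k}×{1,…,m}} with ∑_{c∈C} y_c = k and ∑_{ℓ=1}^{k} x_{i,ℓ,r} ≤ ∑_{c : rank_i(c) ≤ r} y_c for all i, r, is attained by an integral solution; in particular it equals the maximum OWA value over committees W ⊆ C with |W| = k. -/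
/-!
Write `S_{i,r}(y) = ∑_{rank_i c ≤ r} y_c`. Because `α` is non-increasing, for fixed `i` and `r`
the best choice of the `x_{i,ℓ,r}` fills them greedily, so every LP value is at most
`F(y) = ∑_{i,r} w'_r · g(S_{i,r}(y))` with `g(s) = ∑_ℓ α_ℓ · max 0 (min 1 (s - ℓ))`; for a
committee `W`, `F(1_W)` is exactly its OWA value, since `w_ρ = ∑_{r ≥ ρ} w'_r`.

Single-peakedness makes every set `{c | rank_i c ≤ r}` an interval of the axis. Lay the
segments of lengths `y_c` end to end along the axis and select the candidates whose segment
contains a point of `ℤ - φ` (systematic rounding). This gives a committee of size `k` meeting each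
interval of mass `S` in `⌊S⌋` or `⌊S⌋ + 1` candidates, and in `S` candidates on average over
`φ ∈ {0, 1/D, …, (D-1)/D}`, `D` a common denominator of the `y_c`. As `g` is affine between
consecutive integers, `F` of the rounded committees averages to `F(y)`, so one of them is at least
as good as `y`. Hence the LP optimum is the best committee value, attained by its 0/1 solution.
-/

open Finset

section Greedy

variable {K : Type*} [Field K] [LinearOrder K]

def unitClamp (t : K) : K := max 0 (min 1 t)

lemma unitClamp_of_nonpos {t : K} (h : t ≤ 0) : unitClamp t = 0 :=
  max_eq_left ((min_le_right _ _).trans h)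

lemma unitClamp_of_mem_Icc {t : K} (h : t ∈ Set.Icc 0 1) : unitClamp t = t := by
  rw [unitClamp, min_eq_right h.2, max_eq_right h.1]

variable [IsStrictOrderedRing K]

lemma unitClamp_of_one_le {t : K} (h : 1 ≤ t) : unitClamp t = 1 := by
  rw [unitClamp, min_eq_left h, max_eq_right zero_le_one]

lemma unitClamp_natCast_sub_natCast (c j : ℕ) :
    unitClamp ((c : K) - j) = if j < c then 1 else 0 := by
  split_ifs with h
  · exact unitClamp_of_one_le (by rw [le_sub_iff_add_le']; exact_mod_cast h)
  · exact unitClamp_of_nonpos (by rw [sub_nonpos]; exact_mod_cast not_lt.1 h)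

lemma sum_range_unitClamp_sub {t : K} (ht : 0 ≤ t) (p : ℕ) :
    ∑ j ∈ range p, unitClamp (t - j) = min (p : K) t := by
  induction p with
  | zero => simp [ht]
  | succ p ih =>
    rw [sum_range_succ, ih, Nat.cast_succ]
    rcases le_total t p with htp | htp
    · rw [unitClamp_of_nonpos (by linarith), min_eq_right htp, min_eq_right (by linarith),
        add_zero]
    · rcases le_total (p + 1 : K) t with htp' | htp'
      · rw [unitClamp_of_one_le (by linarith), min_eq_left htp, min_eq_left htp']
      · rw [unitClamp_of_mem_Icc ⟨by linarith, by linarith⟩, min_eq_left htp,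
          min_eq_right htp']
        ring

lemma exists_unitClamp_sub_eq_affine (f : ℤ) (ℓ : ℕ) :
    ∃ A B : K, ∀ s ∈ Set.Icc (f : K) (f + 1), unitClamp (s - ℓ) = A + B * s := by
  rcases lt_trichotomy (ℓ : ℤ) f with h | h | h
  · have h' : (ℓ : K) + 1 ≤ f := by exact_mod_cast h
    exact ⟨1, 0, fun s hs => by rw [unitClamp_of_one_le (by linarith [hs.1])]; ring⟩
  · have h' : (ℓ : K) = f := by exact_mod_cast h
    exact ⟨-ℓ, 1, fun s hs => by
      rw [unitClamp_of_mem_Icc ⟨by linarith [hs.1], by linarith [hs.2]⟩]; ring⟩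
  · have h' : (f : K) + 1 ≤ ℓ := by exact_mod_cast h
    exact ⟨0, 0, fun s hs => by rw [unitClamp_of_nonpos (by linarith [hs.2])]; ring⟩

variable {k : ℕ}

def greedyValue (α : Fin k → K) (s : K) : K := ∑ ℓ, α ℓ * unitClamp (s - ℓ)

lemma exists_greedyValue_eq_affine (α : Fin k → K) (f : ℤ) :
    ∃ A B : K, ∀ s ∈ Set.Icc (f : K) (f + 1), greedyValue α s = A + B * s := by
  choose A B hAB using fun ℓ : Fin k => exists_unitClamp_sub_eq_affine (K := K) f ℓ
  refine ⟨∑ ℓ, α ℓ * A ℓ, ∑ ℓ, α ℓ * B ℓ, fun s hs => ?_⟩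
  simp only [greedyValue, sum_mul, ← sum_add_distrib]
  refine sum_congr rfl fun ℓ _ => ?_
  rw [hAB ℓ s hs]
  ring

lemma sum_mul_le_greedyValue [FloorRing K] {α : Fin k → K} (hα : Antitone α)
    (hα0 : ∀ ℓ, 0 ≤ α ℓ) {x : Fin k → K} (hx : ∀ ℓ, 0 ≤ x ℓ ∧ x ℓ ≤ 1) {s : K} (hs : ∑ ℓ, x ℓ ≤ s) :
    ∑ ℓ, α ℓ * x ℓ ≤ greedyValue α s := by
  set c : Fin k → K := fun ℓ => unitClamp (s - ℓ)
  have hs0 : 0 ≤ s := (sum_nonneg fun ℓ _ => (hx ℓ).1).trans hs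
  rcases le_or_gt (k : K) s with hks | hsk
  · refine sum_le_sum fun ℓ _ => mul_le_mul_of_nonneg_left ?_ (hα0 ℓ)
    rw [unitClamp_of_one_le]
    · exact (hx ℓ).2
    · have : (ℓ : K) + 1 ≤ k := by exact_mod_cast ℓ.isLt
      linarith
  · have hp : ⌊s⌋₊ < k := (Nat.floor_lt hs0).2 hsk
    set p : Fin k := ⟨⌊s⌋₊, hp⟩
    have hsum_c : ∑ ℓ, c ℓ = s := by
      rw [Fin.sum_univ_eq_sum_range (fun j => unitClamp (s - j)), sum_range_unitClamp_sub hs0,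
        min_eq_right hsk.le]
    -- Exchange around the pivot `p = ⌊s⌋₊`: `c` is `1` before `p` and `0` after it.
    have hexch : ∀ ℓ, (α ℓ - α p) * (x ℓ - c ℓ) ≤ 0 := by
      intro ℓ
      rcases lt_trichotomy ℓ p with h | rfl | h
      · have : c ℓ = 1 := unitClamp_of_one_le (by
          have : (ℓ : K) + 1 ≤ ⌊s⌋₊ := by exact_mod_cast h
          linarith [Nat.floor_le hs0])
        exact mul_nonpos_of_nonneg_of_nonpos (by linarith [hα h.le]) (by linarith [(hx ℓ).2])
      · simp
      · have : c ℓ = 0 := unitClamp_of_nonpos (by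
          have : (⌊s⌋₊ : K) + 1 ≤ ℓ := by exact_mod_cast h
          linarith [Nat.lt_floor_add_one s])
        exact mul_nonpos_of_nonpos_of_nonneg (by linarith [hα h.le]) (by linarith [(hx ℓ).1])
    have hsplit : ∑ ℓ, α ℓ * x ℓ - greedyValue α s
        = ∑ ℓ, (α ℓ - α p) * (x ℓ - c ℓ) + α p * (∑ ℓ, x ℓ - ∑ ℓ, c ℓ) := by
      simp only [greedyValue, c, mul_sub, ← sum_sub_distrib, mul_sum, ← sum_add_distrib]
      exact sum_congr rfl fun ℓ _ => by ring
    have hexch_sum := sum_nonpos fun ℓ (_ : ℓ ∈ univ) => hexch ℓ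
    nlinarith [hα0 p]

end Greedy

section PrefixSum

variable {α M : Type*} [Fintype α]

def prefixSum [AddCommMonoid M] (pos : α → ℕ) (y : α → M) (n : ℕ) : M :=
  ∑ c with pos c < n, y c

lemma sum_eq_prefixSum_sub [AddCommGroup M] [DecidableEq α] {pos : α → ℕ} {y : α → M}
    {T : Finset α} {a b : ℕ} (hab : a ≤ b) (hT : ∀ c, c ∈ T ↔ a ≤ pos c ∧ pos c < b) :
    ∑ c ∈ T, y c = prefixSum pos y b - prefixSum pos y a := by
  have hsub : univ.filter (pos · < a) ⊆ univ.filter (pos · < b) :=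
    monotone_filter_right _ fun c _ h => lt_of_lt_of_le h hab
  rw [prefixSum, prefixSum, ← sum_sdiff_eq_sub hsub]
  congr 1
  ext c
  simp only [hT, mem_sdiff, mem_filter, mem_univ, true_and, not_lt]
  tauto

lemma prefixSum_succ_of_forall_ne [AddCommMonoid M] {pos : α → ℕ} {y : α → M} {n : ℕ}
    (h : ∀ c, pos c ≠ n) :
    prefixSum pos y (n + 1) = prefixSum pos y n := by
  unfold prefixSum
  congr 1
  ext c
  simp only [mem_filter, mem_univ, true_and]
  have := h c
  omega

end PrefixSum

section SystematicRounding

variable {K : Type*} [Field K] [LinearOrder K] [IsStrictOrderedRing K] [FloorRing K]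

lemma floor_sub_floor_mem_Icc (x y : K) : ⌊x⌋ - ⌊y⌋ ∈ Set.Icc ⌊x - y⌋ (⌊x - y⌋ + 1) := by
  have h₁ := Int.le_floor_add (x - y) y
  have h₂ := Int.le_floor_add_floor (x - y) y
  rw [sub_add_cancel] at h₁ h₂
  constructor <;> omega

lemma floor_add_sub_floor_eq_zero_or_one (x : K) {u : K} (hu : 0 ≤ u ∧ u ≤ 1) :
    ⌊x + u⌋ - ⌊x⌋ = 0 ∨ ⌊x + u⌋ - ⌊x⌋ = 1 := by
  have h₁ : ⌊x⌋ ≤ ⌊x + u⌋ := Int.floor_mono (by linarith)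
  have h₂ : ⌊x + u⌋ ≤ ⌊x⌋ + 1 := by
    rw [← Int.floor_add_one]
    exact Int.floor_mono (by linarith)
  omega

lemma sum_range_floor_add_inv_add_div {D : ℕ} (hD : 0 < D) (s : K) :
    ∑ t ∈ range D, ⌊s + 1 / D + t / D⌋ = ∑ t ∈ range D, ⌊s + t / D⌋ + 1 := by
  have hD' : (D : K) ≠ 0 := by positivity
  have h := (sum_range_succ' (fun t : ℕ => ⌊s + t / D⌋) D).symm.trans
    (sum_range_succ (fun t : ℕ => ⌊s + t / D⌋) D)
  simp only [Nat.cast_succ, Nat.cast_zero, zero_div, add_zero, div_self hD',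
    Int.floor_add_one] at h
  simp only [add_assoc, ← add_div, add_comm (1 : K)]
  linarith

/-- Hermite's identity `∑_{t<D} ⌊x + t/D⌋ = ⌊D x⌋` at the points `x = e/D`. -/
lemma sum_range_floor_intCast_div_add_div {D : ℕ} (hD : 0 < D) (e : ℤ) :
    ∑ t ∈ range D, ⌊(e : K) / D + t / D⌋ = e := by
  induction e using Int.induction_on with
  | zero =>
    refine sum_eq_zero fun t ht => ?_
    rw [Int.cast_zero, zero_div, zero_add, Int.floor_eq_zero_iff]
    exact ⟨by positivity, (div_lt_one (by positivity)).2 (by exact_mod_cast mem_range.1 ht)⟩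
  | succ e ih =>
    rw [Int.cast_add, Int.cast_one, add_div, sum_range_floor_add_inv_add_div hD, ih]
  | pred e ih =>
    have h := sum_range_floor_add_inv_add_div hD (((-(e : ℤ) - 1 : ℤ) : K) / D)
    rw [← add_div, show ((-(e : ℤ) - 1 : ℤ) : K) + 1 = ((-(e : ℤ) : ℤ) : K) by push_cast; ring,
      ih] at h
    linarith

variable {α : Type*} [Fintype α] {pos : α → ℕ} {y : α → K}

/-- `c` is selected when its segment `(P (pos c), P (pos c + 1)]` of the axis, of length `y c`,
contains a point of `ℤ - φ`. -/
def systematicRound (pos : α → ℕ) (y : α → K) (φ : K) : Finset α :=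
  {c | ⌊prefixSum pos y (pos c) + φ⌋ < ⌊prefixSum pos y (pos c + 1) + φ⌋}

lemma prefixSum_succ_sub_mem_Icc (hpos : Function.Injective pos)
    (hy : ∀ c, 0 ≤ y c ∧ y c ≤ 1) (n : ℕ) :
    0 ≤ prefixSum pos y (n + 1) - prefixSum pos y n ∧
      prefixSum pos y (n + 1) - prefixSum pos y n ≤ 1 := by
  classical
  rw [← sum_eq_prefixSum_sub (T := {c | pos c = n}) n.le_succ (by simp; omega)]
  refine ⟨sum_nonneg fun c _ => (hy c).1, ?_⟩
  have hcard : #({c | pos c = n} : Finset α) ≤ 1 :=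
    card_le_one.2 fun c hc d hd => hpos ((mem_filter.1 hc).2.trans (mem_filter.1 hd).2.symm)
  calc ∑ c with pos c = n, y c ≤ #({c | pos c = n} : Finset α) • (1 : K) :=
        sum_le_card_nsmul _ _ _ fun c _ => (hy c).2
    _ ≤ 1 := by rw [nsmul_one]; exact_mod_cast hcard

variable [DecidableEq α]

lemma card_filter_mem_systematicRound (hpos : Function.Injective pos)
    (hy : ∀ c, 0 ≤ y c ∧ y c ≤ 1) (φ : K) {T : Finset α} {a b : ℕ} (hab : a ≤ b)
    (hT : ∀ c, c ∈ T ↔ a ≤ pos c ∧ pos c < b) :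
    (#{c ∈ T | c ∈ systematicRound pos y φ} : ℤ)
      = ⌊prefixSum pos y b + φ⌋ - ⌊prefixSum pos y a + φ⌋ := by
  set jump : ℕ → ℤ := fun n => ⌊prefixSum pos y (n + 1) + φ⌋ - ⌊prefixSum pos y n + φ⌋
  have hjump : ∀ n, jump n = 0 ∨ jump n = 1 := fun n => by
    have h := floor_add_sub_floor_eq_zero_or_one (prefixSum pos y n + φ)
      (prefixSum_succ_sub_mem_Icc hpos hy n)
    rwa [add_right_comm, add_sub_cancel] at h
  have hmem : ∀ c, c ∈ systematicRound pos y φ ↔ jump (pos c) = 1 := fun c => by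
    have := hjump (pos c)
    simp only [systematicRound, mem_filter, mem_univ, true_and, jump] at this ⊢
    omega
  calc (#{c ∈ T | c ∈ systematicRound pos y φ} : ℤ) = ∑ c ∈ T, jump (pos c) := by
        rw [card_filter]
        push_cast
        refine sum_congr rfl fun c _ => ?_
        split_ifs with h
        · exact ((hmem c).1 h).symm
        · exact ((hjump (pos c)).resolve_right (mt (hmem c).2 h)).symm
    _ = ∑ n ∈ Ico a b, jump n := by
        rw [← sum_image hpos.injOn]
        refine sum_subset (fun n hn => ?_) fun n hn hnT => ?_
        · obtain ⟨c, hc, rfl⟩ := mem_image.1 hn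
          exact mem_Ico.2 ((hT c).1 hc)
        · have hgap : ∀ c, pos c ≠ n := fun c hc =>
            hnT (mem_image.2 ⟨c, (hT c).2 (hc ▸ mem_Ico.1 hn), hc⟩)
          simp only [jump, prefixSum_succ_of_forall_ne hgap, sub_self]
    _ = ⌊prefixSum pos y b + φ⌋ - ⌊prefixSum pos y a + φ⌋ :=
        sum_Ico_sub (fun n => ⌊prefixSum pos y n + φ⌋) hab

lemma sum_range_apply_card_systematicRound (hpos : Function.Injective pos)
    (hy : ∀ c, 0 ≤ y c ∧ y c ≤ 1) {D : ℕ} (hD : 0 < D)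
    (hyD : ∀ n, ∃ e : ℤ, prefixSum pos y n = e / D) {T : Finset α} {a b : ℕ} (hab : a ≤ b)
    (hT : ∀ c, c ∈ T ↔ a ≤ pos c ∧ pos c < b) {G : K → K}
    (hG : ∀ f : ℤ, ∃ A B : K, ∀ s ∈ Set.Icc (f : K) (f + 1), G s = A + B * s) :
    ∑ t ∈ range D, G #{c ∈ T | c ∈ systematicRound pos y ((t : K) / D)}
      = D * G (∑ c ∈ T, y c) := by
  set S := ∑ c ∈ T, y c
  set count : ℕ → K := fun t => #{c ∈ T | c ∈ systematicRound pos y ((t : K) / D)}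
  have hcount : ∀ t, count t
      = ⌊prefixSum pos y b + t / D⌋ - ⌊prefixSum pos y a + t / D⌋ := fun t => by
    simp only [count]
    exact_mod_cast card_filter_mem_systematicRound hpos hy _ hab hT
  have hS : S = prefixSum pos y b - prefixSum pos y a := sum_eq_prefixSum_sub hab hT
  obtain ⟨A, B, hAB⟩ := hG ⌊S⌋
  have hcount_mem : ∀ t, count t ∈ Set.Icc (⌊S⌋ : K) (⌊S⌋ + 1) := fun t => by
    have h := floor_sub_floor_mem_Icc (prefixSum pos y b + t / D) (prefixSum pos y a + t / D)
    rw [add_sub_add_right_eq_sub, ← hS] at h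
    rw [hcount]
    exact ⟨by exact_mod_cast h.1, by exact_mod_cast h.2⟩
  have hsum : ∑ t ∈ range D, count t = D * S := by
    obtain ⟨ea, ha⟩ := hyD a
    obtain ⟨eb, hb⟩ := hyD b
    simp only [hcount, ← Int.cast_sum, sum_sub_distrib, ha, hb,
      sum_range_floor_intCast_div_add_div hD, hS]
    field_simp
  calc ∑ t ∈ range D, G (count t) = ∑ t ∈ range D, (A + B * count t) :=
        sum_congr rfl fun t _ => hAB _ (hcount_mem t)
    _ = D * (A + B * S) := by
        rw [sum_add_distrib, ← mul_sum, hsum, sum_const, card_range, nsmul_eq_mul]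
        ring
    _ = D * G S := by rw [hAB S ⟨Int.floor_le S, (Int.lt_floor_add_one S).le⟩]

lemma card_systematicRound (hpos : Function.Injective pos) (hy : ∀ c, 0 ≤ y c ∧ y c ≤ 1)
    {k : ℕ} (hyk : ∑ c, y c = k) (φ : K) : #(systematicRound pos y φ) = k := by
  set M := univ.sup pos + 1
  have hM : ∀ c, pos c < M := fun c => Nat.lt_succ_of_le (le_sup (mem_univ c))
  have h := card_filter_mem_systematicRound hpos hy φ (T := univ) (Nat.zero_le M)
    (fun c => by simp [hM c])
  have hPM : prefixSum pos y M = k := by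
    rw [prefixSum, filter_true_of_mem fun c _ => hM c, hyk]
  have hP0 : prefixSum pos y 0 = 0 := by simp [prefixSum]
  rw [hPM, hP0, zero_add, Int.floor_natCast_add, add_sub_cancel_right] at h
  simpa using h

end SystematicRounding

section RationalRounding

lemma exists_nat_mul_eq_intCast {α : Type*} [Fintype α] (y : α → ℚ) :
    ∃ D : ℕ, 0 < D ∧ ∀ c, ∃ e : ℤ, (D : ℚ) * y c = e := by
  refine ⟨∏ c, (y c).den, prod_pos fun c _ => (y c).pos, fun c => ?_⟩
  obtain ⟨t, ht⟩ := dvd_prod_of_mem (fun c => (y c).den) (mem_univ c)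
  refine ⟨t * (y c).num, ?_⟩
  rw [ht]
  push_cast
  rw [mul_comm ((y c).den : ℚ), mul_assoc, Rat.den_mul_eq_num]

variable {α : Type*} [Fintype α] [DecidableEq α] {pos : α → ℕ} {y : α → ℚ}

theorem exists_card_eq_sum_le_sum_card_of_intervals (hpos : Function.Injective pos)
    (hy : ∀ c, 0 ≤ y c ∧ y c ≤ 1) {k : ℕ} (hyk : ∑ c, y c = k) {ι : Type*} [Fintype ι]
    (T : ι → Finset α) (hT : ∀ i, ∃ a b, a ≤ b ∧ ∀ c, c ∈ T i ↔ a ≤ pos c ∧ pos c < b)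
    (G : ι → ℚ → ℚ)
    (hG : ∀ i, ∀ f : ℤ, ∃ A B : ℚ, ∀ s ∈ Set.Icc (f : ℚ) (f + 1), G i s = A + B * s) :
    ∃ W : Finset α, #W = k ∧ ∑ i, G i (∑ c ∈ T i, y c) ≤ ∑ i, G i #{c ∈ T i | c ∈ W} := by
  obtain ⟨D, hD, hDy⟩ := exists_nat_mul_eq_intCast y
  choose e he using hDy
  have hyD : ∀ n, ∃ e : ℤ, prefixSum pos y n = e / D := fun n => by
    refine ⟨∑ c with pos c < n, e c, ?_⟩
    rw [prefixSum, Int.cast_sum, sum_div]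
    refine sum_congr rfl fun c _ => ?_
    rw [← he]
    field_simp
  have havg : ∀ i, ∑ t ∈ range D, G i #{c ∈ T i | c ∈ systematicRound pos y ((t : ℚ) / D)}
      = D * G i (∑ c ∈ T i, y c) := fun i => by
    obtain ⟨a, b, hab, hTi⟩ := hT i
    exact sum_range_apply_card_systematicRound hpos hy hD hyD hab hTi (hG i)
  obtain ⟨t, -, ht⟩ := exists_le_of_sum_le (s := range D) (nonempty_range_iff.2 hD.ne')
    (f := fun (_ : ℕ) => ∑ i, G i (∑ c ∈ T i, y c))
    (g := fun t : ℕ => ∑ i, G i #{c ∈ T i | c ∈ systematicRound pos y ((t : ℚ) / D)})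
    (le_of_eq (by
      rw [sum_const, card_range, nsmul_eq_mul, mul_sum, sum_comm]
      exact sum_congr rfl fun i _ => (havg i).symm))
  exact ⟨_, card_systematicRound hpos hy hyk _, ht⟩

end RationalRounding

lemma exists_Ico_iff_of_between {α : Type*} [Fintype α] {pos : α → ℕ}
    (hpos : Function.Injective pos) {p : α → Prop} [DecidablePred p]
    (hp : ∀ a b c, pos a < pos b → pos b < pos c → p a → p c → p b) :
    ∃ a b, a ≤ b ∧ ∀ c, p c ↔ a ≤ pos c ∧ pos c < b := by
  by_cases hne : ∃ c, p c
  swap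
  · exact ⟨0, 0, le_rfl, fun c => iff_of_false (fun h => hne ⟨c, h⟩) (by omega)⟩
  set S := (univ.filter p).image pos
  have hS : S.Nonempty := by
    obtain ⟨c, hc⟩ := hne
    exact ⟨pos c, mem_image_of_mem _ (mem_filter.2 ⟨mem_univ c, hc⟩)⟩
  have hmem : ∀ c, p c → pos c ∈ S := fun c hc => mem_image_of_mem _ (mem_filter.2 ⟨mem_univ c, hc⟩)
  obtain ⟨a, ha, ha'⟩ := mem_image.1 (S.min'_mem hS)
  obtain ⟨b, hb, hb'⟩ := mem_image.1 (S.max'_mem hS)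
  have hpa : p a := (mem_filter.1 ha).2
  have hpb : p b := (mem_filter.1 hb).2
  refine ⟨S.min' hS, S.max' hS + 1, by have := S.min'_le _ (S.max'_mem hS); omega,
    fun c => ⟨fun hc => ⟨S.min'_le _ (hmem c hc), Nat.lt_succ_of_le (S.le_max' _ (hmem c hc))⟩,
      fun ⟨h₁, h₂⟩ => ?_⟩⟩
  rcases h₁.eq_or_lt with h₁ | h₁
  · rwa [← hpos (ha'.trans h₁)]
  rcases (Nat.le_of_lt_succ h₂).eq_or_lt with h₂ | h₂
  · rwa [← hpos (hb'.trans h₂.symm)]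
  exact hp a c b (ha' ▸ h₁) (hb' ▸ h₂) hpa hpb

lemma Monotone.apply_le_iff_lt_card {k : ℕ} {β : Type*} [Preorder β] {ρ : Fin k → β}
    (hρ : Monotone ρ) [DecidableLE β] (r : β) (ℓ : Fin k) :
    ρ ℓ ≤ r ↔ (ℓ : ℕ) < #{j | ρ j ≤ r} := by
  constructor
  · intro h
    have hsub : Iic ℓ ⊆ univ.filter (ρ · ≤ r) := fun j hj =>
      mem_filter.2 ⟨mem_univ j, (hρ (mem_Iic.1 hj)).trans h⟩
    have := card_le_card hsub
    rw [Fin.card_Iic] at this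
    omega
  · intro h
    by_contra hℓ
    have hsub : ({j | ρ j ≤ r} : Finset (Fin k)) ⊆ Iio ℓ := fun j hj =>
      mem_Iio.2 (lt_of_not_ge fun hlj => hℓ ((hρ hlj).trans (mem_filter.1 hj).2))
    have := card_le_card hsub
    rw [Fin.card_Iio] at this
    omega

lemma card_filter_comp_eq_of_map_eq {α β γ : Type*} {W : Finset α} {V : Finset β} {f : α → γ}
    {g : β → γ} (h : W.val.map f = V.val.map g) (p : γ → Prop) [DecidablePred p] :
    #{c ∈ W | p (f c)} = #{j ∈ V | p (g j)} := by
  rw [show #{c ∈ W | p (f c)} = Multiset.countP p (W.val.map f) by rw [Multiset.countP_map]; rfl,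
    show #{j ∈ V | p (g j)} = Multiset.countP p (V.val.map g) by rw [Multiset.countP_map]; rfl, h]

lemma exists_monotone_map_eq {β : Type*} [LinearOrder β] {k : ℕ} (M : Multiset β)
    (hM : Multiset.card M = k) :
    ∃ ρ : Fin k → β, Monotone ρ ∧ (univ : Finset (Fin k)).val.map ρ = M := by
  set l := M.sort (· ≤ ·)
  have hlen : l.length = k := by rw [Multiset.length_sort, hM]
  refine ⟨fun ℓ => l.get (Fin.cast hlen.symm ℓ), fun a b hab =>
    (M.pairwise_sort (· ≤ ·)).rel_get_of_le hab, ?_⟩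
  rw [Fin.univ_val_map]
  have : List.ofFn (fun ℓ : Fin k => l.get (Fin.cast hlen.symm ℓ)) = l :=
    List.ext_get (by simp [hlen]) fun i _ _ => by simp
  rw [this, Multiset.sort_eq]

section OWA

variable {m : ℕ}

lemma sum_Ici_eq_of_eq_sub {M : Type*} [AddCommGroup M] {w w' : Fin m → M}
    (hw' : ∀ r : Fin m, w' r = w r - (if h : (r : ℕ) + 1 < m then w ⟨(r : ℕ) + 1, h⟩ else 0))
    (a : Fin m) : ∑ r ∈ Ici a, w' r = w a := by
  set we : ℕ → M := fun j => if h : j < m then w ⟨j, h⟩ else 0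
  have hwe : ∀ r : Fin m, w' r = -(we (r + 1) - we r) := fun r => by simp [we, hw' r, r.isLt]
  calc ∑ r ∈ Ici a, w' r = ∑ j ∈ Ico (a : ℕ) m, -(we (j + 1) - we j) := by
        rw [← Fin.map_valEmbedding_Ici, sum_map]
        exact sum_congr rfl fun r _ => hwe r
    _ = w a := by
        rw [sum_neg_distrib, sum_Ico_sub _ a.isLt.le]
        simp [we, a.isLt]

lemma nonneg_of_eq_sub {w w' : Fin m → ℚ} (hw : Antitone w) (hw0 : ∀ r, 0 ≤ w r)
    (hw' : ∀ r : Fin m, w' r = w r - (if h : (r : ℕ) + 1 < m then w ⟨(r : ℕ) + 1, h⟩ else 0))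
    (r : Fin m) : 0 ≤ w' r := by
  rw [hw' r]
  split_ifs with h
  · exact sub_nonneg.2 (hw (Fin.mk_le_mk.2 (Nat.le_succ r) : r ≤ ⟨r + 1, h⟩))
  · simpa using hw0 r

variable {n k : ℕ} {w w' : Fin m → ℚ}

lemma sum_sum_mul_ite_le_eq
    (hw' : ∀ r : Fin m, w' r = w r - (if h : (r : ℕ) + 1 < m then w ⟨(r : ℕ) + 1, h⟩ else 0))
    (α : Fin k → ℚ) (ρ : Fin k → Fin m) :
    ∑ ℓ, ∑ r, α ℓ * w' r * (if ρ ℓ ≤ r then 1 else 0) = ∑ ℓ, α ℓ * w (ρ ℓ) := by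
  refine sum_congr rfl fun ℓ _ => ?_
  rw [← sum_Ici_eq_of_eq_sub hw' (ρ ℓ), mul_sum, ← filter_le_eq_Ici, sum_filter]
  simp only [mul_ite, mul_one, mul_zero]

lemma sum_mul_ite_le_eq_greedyValue (α : Fin k → ℚ) {ρ : Fin k → Fin m} (hρ : Monotone ρ)
    (r : Fin m) :
    ∑ ℓ, α ℓ * (if ρ ℓ ≤ r then 1 else 0) = greedyValue α #{j | ρ j ≤ r} := by
  refine sum_congr rfl fun ℓ _ => ?_
  rw [unitClamp_natCast_sub_natCast]
  exact congrArg _ (if_congr (hρ.apply_le_iff_lt_card r ℓ) rfl rfl)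

lemma sum_mul_eq_sum_mul_greedyValue
    (hw' : ∀ r : Fin m, w' r = w r - (if h : (r : ℕ) + 1 < m then w ⟨(r : ℕ) + 1, h⟩ else 0))
    (α : Fin k → ℚ) {W : Finset (Fin m)} {f : Fin m → Fin m} {ρ : Fin k → Fin m}
    (hρ : Monotone ρ) (hW : W.val.map f = (univ : Finset (Fin k)).val.map ρ) :
    ∑ ℓ, α ℓ * w (ρ ℓ) = ∑ r, w' r * greedyValue α #{c ∈ W | f c ≤ r} := by
  rw [← sum_sum_mul_ite_le_eq hw', sum_comm]
  refine sum_congr rfl fun r _ => ?_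
  rw [card_filter_comp_eq_of_map_eq hW (· ≤ r), ← sum_mul_ite_le_eq_greedyValue α hρ, mul_sum]
  exact sum_congr rfl fun ℓ _ => by ring

def owaCommitteeValues (rank : Fin n → Fin m → Fin m) (α : Fin k → ℚ) (w : Fin m → ℚ) :
    Set ℚ :=
  {val : ℚ | ∃ (W : Finset (Fin m)) (ρ : Fin n → Fin k → Fin m),
    W.card = k ∧
    (∀ i, Monotone (ρ i)) ∧
    (∀ i, W.val.map (rank i) = (Finset.univ : Finset (Fin k)).val.map (ρ i)) ∧
    val = ∑ i, ∑ ℓ, α ℓ * w (ρ i ℓ)}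

lemma exists_isGreatest_owaCommitteeValues (hk : k ≤ m) (rank : Fin n → Fin m → Fin m)
    (α : Fin k → ℚ) (w : Fin m → ℚ) : ∃ q, IsGreatest (owaCommitteeValues rank α w) q := by
  obtain ⟨W, -, hW⟩ := exists_subset_card_eq (s := (univ : Finset (Fin m))) (by simpa using hk)
  choose ρ hρ hmap using fun i =>
    exists_monotone_map_eq (k := k) (W.val.map (rank i)) (by rw [Multiset.card_map]; exact hW)
  have hfin : (owaCommitteeValues rank α w).Finite :=
    (Set.finite_range fun p : Finset (Fin m) × (Fin n → Fin k → Fin m) =>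
      ∑ i, ∑ ℓ, α ℓ * w (p.2 i ℓ)).subset fun v ⟨W, ρ, _, _, _, hv⟩ => ⟨(W, ρ), hv.symm⟩
  obtain ⟨q, hq, hmax⟩ := Set.exists_max_image _ id hfin
    ⟨_, W, ρ, hW, hρ, fun i => (hmap i).symm, rfl⟩
  exact ⟨q, hq, hmax⟩

lemma exists_zero_one_solution_of_mem_owaCommitteeValues
    (hw' : ∀ r : Fin m, w' r = w r - (if h : (r : ℕ) + 1 < m then w ⟨(r : ℕ) + 1, h⟩ else 0))
    {rank : Fin n → Fin m → Fin m} {α : Fin k → ℚ} {q : ℚ}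
    (hq : q ∈ owaCommitteeValues rank α w) :
    ∃ (y : Fin m → ℚ) (x : Fin n → Fin k → Fin m → ℚ),
      (∀ c, y c = 0 ∨ y c = 1) ∧
      (∀ i ℓ r, x i ℓ r = 0 ∨ x i ℓ r = 1) ∧
      (∑ c, y c) = (k : ℚ) ∧
      (∀ i r, (∑ ℓ, x i ℓ r) ≤ ∑ c ∈ univ.filter (fun c => rank i c ≤ r), y c) ∧
      q = ∑ i, ∑ ℓ, ∑ r, α ℓ * w' r * x i ℓ r := by
  obtain ⟨W, ρ, hWk, hρ, hmap, rfl⟩ := hq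
  refine ⟨fun c => if c ∈ W then 1 else 0, fun i ℓ r => if ρ i ℓ ≤ r then 1 else 0,
    fun c => by by_cases h : c ∈ W <;> simp [h],
    fun i ℓ r => by by_cases h : ρ i ℓ ≤ r <;> simp [h], ?_, fun i r => ?_,
    sum_congr rfl fun i _ => (sum_sum_mul_ite_le_eq hw' α (ρ i)).symm⟩
  · simp [hWk]
  · refine le_of_eq ?_
    rw [sum_boole, sum_boole, filter_filter, ← card_filter_comp_eq_of_map_eq (hmap i) (· ≤ r)]
    congr 2
    ext c
    simp [and_comm]

lemma sum_sum_mul_le_sum_mul_greedyValue {α : Fin k → ℚ} (hα : Antitone α)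
    (hα0 : ∀ ℓ, 0 ≤ α ℓ) (hw'0 : ∀ r, 0 ≤ w' r) {x : Fin k → Fin m → ℚ}
    (hx : ∀ ℓ r, 0 ≤ x ℓ r ∧ x ℓ r ≤ 1) {S : Fin m → ℚ} (hxS : ∀ r, ∑ ℓ, x ℓ r ≤ S r) :
    ∑ ℓ, ∑ r, α ℓ * w' r * x ℓ r ≤ ∑ r, w' r * greedyValue α (S r) := by
  rw [sum_comm]
  refine sum_le_sum fun r _ => ?_
  calc ∑ ℓ, α ℓ * w' r * x ℓ r = w' r * ∑ ℓ, α ℓ * x ℓ r := by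
        rw [mul_sum]
        exact sum_congr rfl fun ℓ _ => by ring
    _ ≤ w' r * greedyValue α (S r) :=
        mul_le_mul_of_nonneg_left (sum_mul_le_greedyValue hα hα0 (fun ℓ => hx ℓ r) (hxS r))
          (hw'0 r)

lemma exists_mem_owaCommitteeValues_le {rank : Fin n → Fin m → Fin m}
    (hSP : ∃ pos : Equiv.Perm (Fin m), ∀ (i : Fin n) (r : Fin m) (a b c : Fin m),
      pos a < pos b → pos b < pos c →
      rank i a ≤ r → rank i c ≤ r → rank i b ≤ r)
    {α : Fin k → ℚ} (hα : Antitone α) (hα0 : ∀ ℓ, 0 ≤ α ℓ) (hw'0 : ∀ r, 0 ≤ w' r)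
    (hw' : ∀ r : Fin m, w' r = w r - (if h : (r : ℕ) + 1 < m then w ⟨(r : ℕ) + 1, h⟩ else 0))
    {y : Fin m → ℚ} {x : Fin n → Fin k → Fin m → ℚ}
    (hy : ∀ c, 0 ≤ y c ∧ y c ≤ 1) (hx : ∀ i ℓ r, 0 ≤ x i ℓ r ∧ x i ℓ r ≤ 1)
    (hyk : (∑ c, y c) = (k : ℚ))
    (hxy : ∀ i r, (∑ ℓ, x i ℓ r) ≤ ∑ c ∈ univ.filter (fun c => rank i c ≤ r), y c) :
    ∃ v ∈ owaCommitteeValues rank α w, ∑ i, ∑ ℓ, ∑ r, α ℓ * w' r * x i ℓ r ≤ v := by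
  obtain ⟨pos, hpos⟩ := hSP
  have hinj : Function.Injective fun c => (pos c : ℕ) := Fin.val_injective.comp pos.injective
  set T : Fin n × Fin m → Finset (Fin m) := fun p => univ.filter (rank p.1 · ≤ p.2)
  have hT : ∀ p, ∃ a b, a ≤ b ∧ ∀ c, c ∈ T p ↔ a ≤ (pos c : ℕ) ∧ (pos c : ℕ) < b := fun p => by
    simpa [T] using exists_Ico_iff_of_between hinj (p := (rank p.1 · ≤ p.2))
      fun a b c hab hbc => hpos p.1 p.2 a b c hab hbc
  obtain ⟨W, hWk, hW⟩ := exists_card_eq_sum_le_sum_card_of_intervals hinj hy hyk T hT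
    (fun p s => w' p.2 * greedyValue α s) fun p f => by
      obtain ⟨A, B, hAB⟩ := exists_greedyValue_eq_affine α f
      exact ⟨w' p.2 * A, w' p.2 * B, fun s hs => by rw [hAB s hs]; ring⟩
  choose ρ hρ hmap using fun i =>
    exists_monotone_map_eq (k := k) (W.val.map (rank i)) (by rw [Multiset.card_map]; exact hWk)
  refine ⟨_, ⟨W, ρ, hWk, hρ, fun i => (hmap i).symm, rfl⟩, ?_⟩
  calc ∑ i, ∑ ℓ, ∑ r, α ℓ * w' r * x i ℓ r
      ≤ ∑ i, ∑ r, w' r * greedyValue α (∑ c ∈ T (i, r), y c) :=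
        sum_le_sum fun i _ => sum_sum_mul_le_sum_mul_greedyValue hα hα0 hw'0 (hx i) (hxy i)
    _ ≤ ∑ i, ∑ r, w' r * greedyValue α #{c ∈ T (i, r) | c ∈ W} := by
        simpa only [Fintype.sum_prod_type] using hW
    _ = ∑ i, ∑ ℓ, α ℓ * w (ρ i ℓ) := by
        refine sum_congr rfl fun i _ => ?_
        rw [sum_mul_eq_sum_mul_greedyValue hw' α (hρ i) (hmap i).symm]
        refine sum_congr rfl fun r _ => ?_
        congr 4
        ext c
        simp [T, and_comm]

end OWA

/-- For a single-peaked profile of rank functions, the LP relaxation of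
(OWA-IP) has an optimal solution that is integral; in particular its
optimal value equals the maximum OWA value over committees `W` of size `k`,
where the value of `W` is `∑_i ∑_ℓ α_ℓ · w (ρ i ℓ)` with `ρ i` enumerating
the multiset of ranks `{rank i c : c ∈ W}` in non-decreasing order. -/
theorem stmt13 {n m k : ℕ} (hk : k ≤ m)
    (rank : Fin n → Fin m → Fin m)
    (hSP : ∃ pos : Equiv.Perm (Fin m), ∀ (i : Fin n) (r : Fin m) (a b c : Fin m),
      pos a < pos b → pos b < pos c →
      rank i a ≤ r → rank i c ≤ r → rank i b ≤ r)
    (α : Fin k → ℚ) (hαmono : ∀ i j : Fin k, i ≤ j → α j ≤ α i)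
    (hαnonneg : ∀ ℓ, 0 ≤ α ℓ)
    (w : Fin m → ℚ) (hwmono : ∀ r s : Fin m, r ≤ s → w s ≤ w r)
    (hwnonneg : ∀ r, 0 ≤ w r)
    (w' : Fin m → ℚ)
    (hw' : ∀ r : Fin m,
      w' r = w r - (if h : (r : ℕ) + 1 < m then w ⟨(r : ℕ) + 1, h⟩ else 0)) :
    ∃ q : ℚ,
      IsGreatest {val : ℚ | ∃ (y : Fin m → ℚ) (x : Fin n → Fin k → Fin m → ℚ),
        (∀ c, 0 ≤ y c ∧ y c ≤ 1) ∧
        (∀ i ℓ r, 0 ≤ x i ℓ r ∧ x i ℓ r ≤ 1) ∧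
        (∑ c, y c) = (k : ℚ) ∧
        (∀ i r, (∑ ℓ, x i ℓ r) ≤
          ∑ c ∈ Finset.univ.filter (fun c => rank i c ≤ r), y c) ∧
        val = ∑ i, ∑ ℓ, ∑ r, α ℓ * w' r * x i ℓ r} q ∧
      (∃ (y : Fin m → ℚ) (x : Fin n → Fin k → Fin m → ℚ),
        (∀ c, y c = 0 ∨ y c = 1) ∧
        (∀ i ℓ r, x i ℓ r = 0 ∨ x i ℓ r = 1) ∧
        (∑ c, y c) = (k : ℚ) ∧
        (∀ i r, (∑ ℓ, x i ℓ r) ≤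
          ∑ c ∈ Finset.univ.filter (fun c => rank i c ≤ r), y c) ∧
        q = ∑ i, ∑ ℓ, ∑ r, α ℓ * w' r * x i ℓ r) ∧
      IsGreatest {val : ℚ | ∃ (W : Finset (Fin m)) (ρ : Fin n → Fin k → Fin m),
        W.card = k ∧
        (∀ i, Monotone (ρ i)) ∧
        (∀ i, W.val.map (rank i) = (Finset.univ : Finset (Fin k)).val.map (ρ i)) ∧
        val = ∑ i, ∑ ℓ, α ℓ * w (ρ i ℓ)} q := by
  have hw'0 : ∀ r, 0 ≤ w' r := nonneg_of_eq_sub hwmono hwnonneg hw'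
  obtain ⟨q, hq⟩ := exists_isGreatest_owaCommitteeValues hk rank α w
  obtain ⟨y, x, hy, hx, hyk, hxy, hqx⟩ :=
    exists_zero_one_solution_of_mem_owaCommitteeValues hw' hq.1
  refine ⟨q, ⟨⟨y, x, fun c => ?_, fun i ℓ r => ?_, hyk, hxy, hqx⟩, ?_⟩,
    ⟨y, x, hy, hx, hyk, hxy, hqx⟩, hq⟩
  · rcases hy c with h | h <;> simp [h]
  · rcases hx i ℓ r with h | h <;> simp [h]
  · rintro _ ⟨y, x, hy, hx, hyk, hxy, rfl⟩
    obtain ⟨v, hv, hle⟩ :=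
      exists_mem_owaCommitteeValues_le hSP hαmono hαnonneg hw'0 hw' hy hx hyk hxy
    exact hle.trans (hq.2 hv)
end

section
/- Let P = (≻_1,…,≻_n) be a profile of linear orders over a finite set A that is single-crossing with respect to the voter ordering 1,…,n (for every pair x,y ∈ A, the set {i : x ≻_i y} is an interval of {1,…,n}), and let a ∈ A. Then the matrix with rows indexed by b ∈ A∖{a} and columns indexed by voters i ∈ {1,…,n}, whose (b,i)-entry is 1 if b ≻_i a and 0 otherwise, is totally unimodular. -/
/-- A rational matrix is totally unimodular if every square submatrix
(given by a choice of distinct rows and distinct columns) has determinant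
in `{-1, 0, 1}`. -/
def IsTU {R C : Type*} (A : Matrix R C ℚ) : Prop :=
  ∀ (k : ℕ) (f : Fin k → R) (g : Fin k → C),
    Function.Injective f → Function.Injective g →
      (A.submatrix f g).det ∈ ({-1, 0, 1} : Set ℚ)

/-- A "convex" predicate on `Fin k` is an interval. -/
lemma convexToInterval {k : ℕ} (P : Fin k → Prop) [DecidablePred P]
    (hc : ∀ j1 j2 j3 : Fin k, j1 ≤ j2 → j2 ≤ j3 → P j1 → P j3 → P j2) :
    ∃ p q : ℕ, ∀ j : Fin k, P j ↔ p ≤ (j : ℕ) ∧ (j : ℕ) < q := by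
  by_cases hne : (Finset.univ.filter P).Nonempty
  · set T := Finset.univ.filter P with hT
    refine ⟨((T.min' hne : Fin k) : ℕ), ((T.max' hne : Fin k) : ℕ) + 1, fun j => ?_⟩
    constructor
    · intro hj
      have hjT : j ∈ T := by simp [hT, hj]
      exact ⟨T.min'_le j hjT, Nat.lt_succ_of_le (T.le_max' j hjT)⟩
    · rintro ⟨h1, h2⟩
      have hmin : P (T.min' hne) := (Finset.mem_filter.mp (T.min'_mem hne)).2
      have hmax : P (T.max' hne) := (Finset.mem_filter.mp (T.max'_mem hne)).2
      exact hc _ j _ h1 (Nat.lt_succ_iff.mp h2) hmin hmax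
  · refine ⟨0, 0, fun j => ?_⟩
    simp only [Nat.not_lt_zero, and_false, iff_false]
    intro hj
    exact hne ⟨j, by simp [hj]⟩

lemma neg_one_pow_mul_mem (t : ℕ) (d : ℚ) (hd : d ∈ ({-1, 0, 1} : Set ℚ)) :
    (-1 : ℚ) ^ t * d ∈ ({-1, 0, 1} : Set ℚ) := by
  rcases Nat.even_or_odd t with h | h
  · rw [h.neg_one_pow, one_mul]; exact hd
  · rw [h.neg_one_pow, neg_one_mul]
    simp only [Set.mem_insert_iff, Set.mem_singleton_iff] at hd ⊢
    rcases hd with h | h | h <;> rw [h] <;> norm_num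

/-- Every square 0/1 matrix with the consecutive-ones property on rows has
determinant in `{-1, 0, 1}`. -/
lemma interval_det : ∀ (k : ℕ) (M : Matrix (Fin k) (Fin k) ℚ) (p q : Fin k → ℕ),
    (∀ i j, M i j = if p i ≤ (j : ℕ) ∧ (j : ℕ) < q i then 1 else 0) →
    M.det ∈ ({-1, 0, 1} : Set ℚ) := by
  intro k
  induction k with
  | zero =>
    intro M p q hM
    simp [Matrix.det_fin_zero]
  | succ s ih =>
    intro M p q hM
    by_cases hcol : ∃ i, p i = 0 ∧ 0 < q i
    · -- pick a row i0 covering column 0 with minimal right endpoint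
      set S : Finset (Fin (s + 1)) := Finset.univ.filter (fun i => p i = 0 ∧ 0 < q i) with hS
      have hSne : S.Nonempty := by
        obtain ⟨i, hi⟩ := hcol
        exact ⟨i, by simp [hS, hi.1, hi.2]⟩
      obtain ⟨i0, hi0S, hi0min⟩ := S.exists_min_image q hSne
      have hi0 : p i0 = 0 ∧ 0 < q i0 := by
        simpa [hS] using hi0S
      classical
      set v : Fin (s + 1) → ℚ :=
        fun i => if i ≠ i0 ∧ p i = 0 ∧ 0 < q i then 1 else 0 with hv
      set e : Fin (s + 1) → ℚ := fun i => if i = i0 then 1 else 0 with he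
      set N : Matrix (Fin (s + 1)) (Fin (s + 1)) ℚ :=
        fun i j => M i j - v i * M i0 j with hNdef
      -- determinant is unchanged
      have hrm : ∀ (u : Unit) (j : Fin (s + 1)),
          (Matrix.replicateRow Unit e * M) u j = M i0 j := by
        intro u j
        simp [Matrix.mul_apply, he, ite_mul, Finset.sum_ite_eq']
      have hfact : N = (1 + Matrix.replicateCol Unit (-v) * Matrix.replicateRow Unit e) * M := by
        ext i j
        rw [Matrix.add_mul, Matrix.one_mul, Matrix.add_apply, Matrix.mul_assoc,
          Matrix.mul_apply]
        simp only [Matrix.replicateCol_apply, hrm, Finset.univ_unique, Finset.sum_singleton,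
          Pi.neg_apply, hNdef]
        ring
      have hdetE : (1 + Matrix.replicateCol Unit (-v) * Matrix.replicateRow Unit e).det = 1 := by
        rw [Matrix.det_one_add_replicateCol_mul_replicateRow]
        simp [dotProduct, he, hv, Finset.sum_ite_eq']
        apply Finset.sum_eq_zero
        intro x _
        split_ifs <;> simp_all
      have hdetN : N.det = M.det := by
        rw [hfact, Matrix.det_mul, hdetE, one_mul]
      -- N has the interval property
      set p' : Fin (s + 1) → ℕ :=
        fun i => if i ≠ i0 ∧ p i = 0 ∧ 0 < q i then q i0 else p i with hp'
      have hq0le : ∀ i, i ≠ i0 → p i = 0 → 0 < q i → q i0 ≤ q i := by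
        intro i hne h0 hpos
        exact hi0min i (by simp [hS, h0, hpos])
      have hN : ∀ i j, N i j = if p' i ≤ (j : ℕ) ∧ (j : ℕ) < q i then 1 else 0 := by
        intro i j
        simp only [hNdef, hp', hv, hM]
        by_cases hcase : i ≠ i0 ∧ p i = 0 ∧ 0 < q i
        · have hle := hq0le i hcase.1 hcase.2.1 hcase.2.2
          simp only [hcase, if_true, hi0.1, hcase.2.1]
          split_ifs <;> try ring
          all_goals omega
        · simp only [hcase, if_false]
          ring_nf
      -- column 0 of N is the standard basis vector at i0
      have hNcol : ∀ i, N i 0 = if i = i0 then 1 else 0 := by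
        intro i
        rw [hN]
        by_cases hii : i = i0
        · subst hii
          simp [hp', hi0.1, hi0.2]
        · rw [if_neg hii, if_neg]
          by_cases hcase : i ≠ i0 ∧ p i = 0 ∧ 0 < q i
          · have hpi : p' i = q i0 := by simp [hp', hcase]
            rw [hpi]
            simp only [Fin.val_zero]
            omega
          · have hpi : p' i = p i := by simp [hp', hcase]
            rw [hpi]
            simp only [Fin.val_zero]
            push_neg at hcase
            intro hcon
            have h2 := hcase hii
            omega
      -- Laplace expansion along column 0
      rw [← hdetN, Matrix.det_succ_column_zero]
      rw [Finset.sum_eq_single i0]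
      · rw [hNcol i0, if_pos rfl, mul_one]
        apply neg_one_pow_mul_mem
        apply ih (N.submatrix i0.succAbove Fin.succ)
          (fun i => p' (i0.succAbove i) - 1) (fun i => q (i0.succAbove i) - 1)
        intro i j
        simp only [Matrix.submatrix_apply]
        rw [hN]
        have : ((Fin.succ j : Fin (s + 1)) : ℕ) = (j : ℕ) + 1 := Fin.val_succ j
        rw [this]
        apply if_congr _ rfl rfl
        omega
      · intro b _ hb
        rw [hNcol b, if_neg hb]
        ring
      · intro h
        exact absurd (Finset.mem_univ i0) h
    · -- column 0 is zero
      have hz : M.det = 0 := by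
        apply Matrix.det_eq_zero_of_column_eq_zero 0
        intro i
        rw [hM]
        push_neg at hcol
        rw [if_neg]
        simp only [Fin.val_zero]
        intro hcon
        have := hcol i
        omega
      rw [hz]
      simp

/-- For a profile of linear orders (voter `i`'s order is encoded by the
bijective rank function `rank i`, with `b ≻_i a ↔ rank i b < rank i a`)
that is single-crossing with respect to the voter ordering `1,…,n`, the
matrix with one row for each alternative `b ≠ a` and one column per voter,
whose `(b,i)`-entry is `1` if `b ≻_i a` and `0` otherwise, is totally
unimodular. -/
theorem stmt15 {n m : ℕ} (rank : Fin n → Equiv.Perm (Fin m)) (a : Fin m)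
    (hSC : ∀ x y : Fin m, ∀ i j l : Fin n, i ≤ j → j ≤ l →
      rank i x < rank i y → rank l x < rank l y → rank j x < rank j y) :
    IsTU (Matrix.of fun (b : {b : Fin m // b ≠ a}) (i : Fin n) =>
      if rank i b.val < rank i a then (1 : ℚ) else 0) := by
  intro k f g hf hg
  set A := Matrix.of fun (b : {b : Fin m // b ≠ a}) (i : Fin n) =>
      if rank i b.val < rank i a then (1 : ℚ) else 0 with hA
  set σ := Tuple.sort g with hσ
  have hmono : Monotone (g ∘ σ) := Tuple.monotone_sort g
  have hrow : ∀ i : Fin k, ∃ p q : ℕ, ∀ j : Fin k,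
      (rank (g (σ j)) (f i).val < rank (g (σ j)) a) ↔ p ≤ (j : ℕ) ∧ (j : ℕ) < q := by
    intro i
    apply convexToInterval
    intro j1 j2 j3 h12 h23 h1 h3
    exact hSC (f i).val a (g (σ j1)) (g (σ j2)) (g (σ j3))
      (hmono h12) (hmono h23) h1 h3
  choose p q hpq using hrow
  have key : ((A.submatrix f g).submatrix id σ).det ∈ ({-1, 0, 1} : Set ℚ) := by
    apply interval_det k _ p q
    intro i j
    simp only [Matrix.submatrix_apply, id_eq, hA, Matrix.of_apply]
    exact if_congr (hpq i j) rfl rfl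
  rw [Matrix.submatrix_submatrix, Function.comp_id] at key
  have hdet := Matrix.det_permute' σ (A.submatrix f g)
  rw [Matrix.submatrix_submatrix, Function.comp_id] at hdet
  rcases Int.units_eq_one_or (Equiv.Perm.sign σ) with hs | hs <;>
    rw [hs] at hdet <;> simp at hdet
  · rwa [← hdet]
  · have h2 : (A.submatrix f g).det = -(Matrix.det (A.submatrix f (g ∘ σ))) := by
      rw [hdet]; ring
    rw [h2]
    simp only [Set.mem_insert_iff, Set.mem_singleton_iff] at key ⊢
    rcases key with h | h | h <;> rw [h] <;> norm_num
end

section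
/- Let P = (≻_1,…,≻_n) be a profile of linear orders over a finite set A that is single-crossing with respect to the voter ordering 1,…,n, let a ∈ A, let maj(b,a) = |{i : b ≻_i a}| − |{i : a ≻_i b}|, and suppose that for every b ≠ a at least one voter prefers a to b. Then the infimum of ∑_{i=1}^{n} d_i over all rational vectors d ∈ [0,1]^n satisfying ∑_{i : b ≻_i a} d_i ≥ maj(b,a) + 1 for every b ∈ A∖{a} is attained by an integral vector d ∈ {0,1}^n; in particular the LP relaxation of the Young-score integer program has the same optimal value as the integer program. -/
/-- The majority margin of `b` over `a`: the number of voters preferring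
`b` to `a` minus the number of voters preferring `a` to `b`.  Voter `i`'s
linear order is encoded by the bijective rank function `rank i` (rank `0`
is most preferred, so `b ≻_i a ↔ rank i b < rank i a`). -/
def maj {n m : ℕ} (rank : Fin n → Equiv.Perm (Fin m)) (b a : Fin m) : ℤ :=
  ((Finset.univ.filter fun i => rank i b < rank i a).card : ℤ) -
    ((Finset.univ.filter fun i => rank i a < rank i b).card : ℤ)



namespace Young16
attribute [local instance] Classical.propDecidable
variable {n : ℕ} {ι : Type*} [Fintype ι]

noncomputable def gr (B : ι → Finset (Fin n)) (C : ι → ℤ) : ℕ → ℚ :=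
  fun k =>
    if ∀ s : ι, ∀ hk : k < n, (⟨k, hk⟩ : Fin n) ∈ B s →
        (∑ j ∈ ((B s).filter fun j : Fin n => (j : ℕ) < k).attach, gr B C ((j : Fin n) : ℕ)) + 1 ≤ (C s : ℚ)
    then 1 else 0
termination_by k => k
decreasing_by all_goals exact (Finset.mem_filter.mp j.2).2

variable (B : ι → Finset (Fin n)) (C : ι → ℤ)

lemma gr_eq (k : ℕ) : gr B C k =
    if ∀ s : ι, ∀ hk : k < n, (⟨k, hk⟩ : Fin n) ∈ B s →
        (∑ j ∈ (B s).filter fun j : Fin n => (j : ℕ) < k, gr B C (j : ℕ)) + 1 ≤ (C s : ℚ)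
    then 1 else 0 := by
  rw [gr]
  congr 1
  ext
  constructor <;> intro h s hk hm <;> have := h s hk hm <;>
    rwa [Finset.sum_attach ((B s).filter fun j : Fin n => (j : ℕ) < k) (fun j => gr B C (j : ℕ))] at *

lemma gr_zero_one (k : ℕ) : gr B C k = 0 ∨ gr B C k = 1 := by
  rw [gr_eq]; split <;> simp

lemma gr_nonneg (k : ℕ) : 0 ≤ gr B C k := by
  rcases gr_zero_one B C k with h | h <;> rw [h] <;> norm_num

lemma gr_le_one (k : ℕ) : gr B C k ≤ 1 := by
  rcases gr_zero_one B C k with h | h <;> rw [h] <;> norm_num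

lemma sum_gr_int (F : Finset (Fin n)) : ∃ N : ℕ, ∑ j ∈ F, gr B C (j : ℕ) = (N : ℚ) := by
  classical
  induction F using Finset.cons_induction with
  | empty => exact ⟨0, by simp⟩
  | cons a s ha ih =>
    obtain ⟨N, hN⟩ := ih
    rcases gr_zero_one B C (a : ℕ) with h | h
    · exact ⟨N, by rw [Finset.sum_cons, h, hN]; ring⟩
    · exact ⟨N + 1, by rw [Finset.sum_cons, h, hN]; push_cast; ring⟩

variable (hC : ∀ s, (0 : ℤ) ≤ C s)

include hC in
lemma gr_invariant (k : ℕ) (s : ι) :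
    ∑ j ∈ (B s).filter (fun j : Fin n => (j : ℕ) < k), gr B C (j : ℕ) ≤ (C s : ℚ) := by
  induction k with
  | zero => simpa using by exact_mod_cast hC s
  | succ k ih =>
    by_cases hk : k < n
    · by_cases hmem : (⟨k, hk⟩ : Fin n) ∈ B s
      · have hsplit : (B s).filter (fun j : Fin n => (j : ℕ) < k + 1) =
            insert (⟨k, hk⟩ : Fin n) ((B s).filter (fun j : Fin n => (j : ℕ) < k)) := by
          ext j
          simp only [Finset.mem_filter, Finset.mem_insert]
          constructor
          · rintro ⟨hj, hlt⟩
            rcases Nat.lt_succ_iff_lt_or_eq.mp hlt with h | h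
            · exact Or.inr ⟨hj, h⟩
            · exact Or.inl (Fin.ext h)
          · rintro (rfl | ⟨hj, hlt⟩)
            · exact ⟨hmem, Nat.lt_succ_self k⟩
            · exact ⟨hj, Nat.lt_succ_of_lt hlt⟩
        have hnotin : (⟨k, hk⟩ : Fin n) ∉ (B s).filter (fun j : Fin n => (j : ℕ) < k) := by
          simp
        rw [hsplit, Finset.sum_insert hnotin]
        rcases gr_zero_one B C k with h | h
        · rw [h]; simpa using ih
        · -- gr k = 1 means the condition held
          have hcond : ∀ s : ι, ∀ hk : k < n, (⟨k, hk⟩ : Fin n) ∈ B s →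
              (∑ j ∈ (B s).filter fun j : Fin n => (j : ℕ) < k, gr B C (j : ℕ)) + 1 ≤ (C s : ℚ) := by
            by_contra hc
            rw [gr_eq, if_neg hc] at h
            norm_num at h
          have := hcond s hk hmem
          rw [h]
          linarith
      · have : (B s).filter (fun j : Fin n => (j : ℕ) < k + 1) =
            (B s).filter (fun j : Fin n => (j : ℕ) < k) := by
          ext j
          simp only [Finset.mem_filter, and_congr_right_iff]
          intro hj
          constructor
          · intro hlt
            rcases Nat.lt_succ_iff_lt_or_eq.mp hlt with h | h
            · exact h
            · exact absurd hj (by have : j = (⟨k, hk⟩ : Fin n) := Fin.ext (by simpa using h); rw [this]; exact hmem)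
          · exact Nat.lt_succ_of_lt
        rw [this]; exact ih
    · have : (B s).filter (fun j : Fin n => (j : ℕ) < k + 1) =
          (B s).filter (fun j : Fin n => (j : ℕ) < k) := by
        ext j
        simp only [Finset.mem_filter, and_congr_right_iff]
        intro hj
        have := j.isLt
        constructor <;> intro <;> omega
      rw [this]; exact ih

include hC in
lemma gr_feasible (s : ι) : ∑ j ∈ B s, gr B C (j : ℕ) ≤ (C s : ℚ) := by
  have h := gr_invariant B C hC n s
  rwa [Finset.filter_true_of_mem (fun j _ => j.isLt)] at h

include hC in
lemma gr_tight (k : ℕ) (h : gr B C k = 0) :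
    ∃ s : ι, ∃ hk : k < n, (⟨k, hk⟩ : Fin n) ∈ B s ∧
      ∑ j ∈ (B s).filter (fun j : Fin n => (j : ℕ) < k), gr B C (j : ℕ) = (C s : ℚ) := by
  rw [gr_eq] at h
  split at h
  · norm_num at h
  · next hc =>
    push_neg at hc
    obtain ⟨s, hk, hmem, hlt⟩ := hc
    refine ⟨s, hk, hmem, ?_⟩
    obtain ⟨N, hN⟩ := sum_gr_int B C ((B s).filter (fun j : Fin n => (j : ℕ) < k))
    have hle := gr_invariant B C hC k s
    rw [hN] at hlt hle ⊢
    have h1 : (C s : ℚ) < N + 1 := hlt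
    have h2 : (N : ℚ) ≤ (C s : ℚ) := hle
    have h1' : C s < (N : ℤ) + 1 := by exact_mod_cast h1
    have h2' : (N : ℤ) ≤ C s := by exact_mod_cast h2
    have : (N : ℤ) = C s := by omega
    exact_mod_cast this


lemma gr_one_cond (k : ℕ) (h : gr B C k = 1) :
    ∀ s : ι, ∀ hk : k < n, (⟨k, hk⟩ : Fin n) ∈ B s →
      (∑ j ∈ (B s).filter fun j : Fin n => (j : ℕ) < k, gr B C (j : ℕ)) + 1 ≤ (C s : ℚ) := by
  by_contra hc
  rw [gr_eq, if_neg hc] at h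
  norm_num at h

lemma lip_aux (δ x y : ℚ) (h : x ≤ y) : min δ y ≤ min δ x + (y - x) := by
  rcases min_cases δ x with ⟨h1, h2⟩ | ⟨h1, h2⟩ <;>
    rcases min_cases δ y with ⟨h3, h4⟩ | ⟨h3, h4⟩ <;> linarith

variable (hC : ∀ s, (0 : ℤ) ≤ C s)
  (hInt : ∀ s, ∀ i j l : Fin n, i ≤ j → j ≤ l → i ∈ B s → l ∈ B s → j ∈ B s)

include hC hInt in
lemma exchange (k : ℕ) (hk : k < n) (e : Fin n → ℚ)
    (he : ∀ i, 0 ≤ e i ∧ e i ≤ 1) (hfe : ∀ s, ∑ i ∈ B s, e i ≤ (C s : ℚ))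
    (hag : ∀ j : Fin n, (j : ℕ) < k → e j = gr B C (j : ℕ)) :
    ∃ e' : Fin n → ℚ, (∀ i, 0 ≤ e' i ∧ e' i ≤ 1) ∧
      (∀ s, ∑ i ∈ B s, e' i ≤ (C s : ℚ)) ∧
      (∀ j : Fin n, (j : ℕ) < k + 1 → e' j = gr B C (j : ℕ)) ∧
      ∑ i, e i ≤ ∑ i, e' i := by
  set K : Fin n := ⟨k, hk⟩ with hK
  by_cases h0 : e K = gr B C k
  · refine ⟨e, he, hfe, ?_, le_refl _⟩
    intro j hj
    rcases Nat.lt_succ_iff_lt_or_eq.mp hj with h | h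
    · exact hag j h
    · have : j = K := Fin.ext h
      rw [this, h0]
  -- show gr B C k = 1
  have hg1 : gr B C k = 1 := by
    rcases gr_zero_one B C k with hz | ho
    · exfalso
      obtain ⟨s, hk', hmem, htight⟩ := gr_tight B C hC k hz
      have hKK : (⟨k, hk'⟩ : Fin n) = K := rfl
      rw [hKK] at hmem
      -- prefix sums of e and gr agree
      have hpre : ∑ j ∈ (B s).filter (fun j : Fin n => (j : ℕ) < k), e j
          = ∑ j ∈ (B s).filter (fun j : Fin n => (j : ℕ) < k), gr B C (j : ℕ) :=
        Finset.sum_congr rfl (fun j hj => hag j (Finset.mem_filter.mp hj).2)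
      have hsub : insert K ((B s).filter (fun j : Fin n => (j : ℕ) < k)) ⊆ B s := by
        intro j hj
        rcases Finset.mem_insert.mp hj with rfl | hj'
        · exact hmem
        · exact (Finset.mem_filter.mp hj').1
      have hKnot : K ∉ (B s).filter (fun j : Fin n => (j : ℕ) < k) := by simp [hK]
      have hmono : ∑ j ∈ insert K ((B s).filter (fun j : Fin n => (j : ℕ) < k)), e j
          ≤ ∑ i ∈ B s, e i :=
        Finset.sum_le_sum_of_subset_of_nonneg hsub (fun i _ _ => (he i).1)
      rw [Finset.sum_insert hKnot, hpre, htight] at hmono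
      have h1 := hfe s
      have h2 := (he K).1
      have : e K = 0 := by linarith
      exact h0 (by rw [this, hz])
    · exact ho
  have heKlt : e K < 1 := lt_of_le_of_ne (he K).2 (fun h => h0 (h.trans hg1.symm))
  set δ : ℚ := 1 - e K with hδ
  have hδpos : 0 < δ := by simp [hδ]; linarith
  set S : ℕ → ℚ := fun t => ∑ i ∈ Finset.univ.filter (fun i : Fin n => k < (i : ℕ) ∧ (i : ℕ) ≤ t), e i with hS
  set ρ : Fin n → ℚ := fun j => min δ (S (j : ℕ)) - min δ (S ((j : ℕ) - 1)) with hρ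
  set e' : Fin n → ℚ := fun j =>
    if (j : ℕ) < k then e j else if (j : ℕ) = k then 1 else e j - ρ j with he'
  have hSnonneg : ∀ t, 0 ≤ S t := fun t =>
    Finset.sum_nonneg (fun i _ => (he i).1)
  have hS0 : ∀ t, t ≤ k → S t = 0 := by
    intro t ht
    apply Finset.sum_eq_zero
    intro i hi
    have := (Finset.mem_filter.mp hi).2
    omega
  -- S is "cumulative": S j = S (j-1) + e j for k < j < n
  have hScum : ∀ j : Fin n, k < (j : ℕ) → S (j : ℕ) = S ((j : ℕ) - 1) + e j := by
    intro j hj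
    have hsplit : Finset.univ.filter (fun i : Fin n => k < (i : ℕ) ∧ (i : ℕ) ≤ (j : ℕ)) =
        insert j (Finset.univ.filter (fun i : Fin n => k < (i : ℕ) ∧ (i : ℕ) ≤ (j : ℕ) - 1)) := by
      ext i
      simp only [Finset.mem_filter, Finset.mem_insert, Finset.mem_univ, true_and]
      constructor
      · rintro ⟨h1, h2⟩
        by_cases hij : (i : ℕ) = (j : ℕ)
        · exact Or.inl (Fin.ext hij)
        · exact Or.inr ⟨h1, by omega⟩
      · rintro (rfl | ⟨h1, h2⟩)
        · exact ⟨hj, le_refl _⟩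
        · exact ⟨h1, by omega⟩
    have hnotin : j ∉ Finset.univ.filter (fun i : Fin n => k < (i : ℕ) ∧ (i : ℕ) ≤ (j : ℕ) - 1) := by
      simp only [Finset.mem_filter, Finset.mem_univ, true_and, not_and]
      intro; omega
    show (∑ i ∈ Finset.univ.filter (fun i : Fin n => k < (i : ℕ) ∧ (i : ℕ) ≤ (j : ℕ)), e i)
      = (∑ i ∈ Finset.univ.filter (fun i : Fin n => k < (i : ℕ) ∧ (i : ℕ) ≤ (j : ℕ) - 1), e i) + e j
    rw [hsplit, Finset.sum_insert hnotin, add_comm]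
  have hSmono : ∀ t t' : ℕ, t ≤ t' → S t ≤ S t' := by
    intro t t' htt
    apply Finset.sum_le_sum_of_subset_of_nonneg
    · intro i hi
      simp only [Finset.mem_filter, Finset.mem_univ, true_and] at hi ⊢
      omega
    · exact fun i _ _ => (he i).1
  have hρbound : ∀ j : Fin n, k < (j : ℕ) → 0 ≤ ρ j ∧ ρ j ≤ e j := by
    intro j hj
    have hc := hScum j hj
    constructor
    · have : min δ (S ((j:ℕ) - 1)) ≤ min δ (S (j:ℕ)) :=
        min_le_min (le_refl _) (hSmono _ _ (by omega))
      simp only [hρ]; linarith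
    · have h1 : S ((j:ℕ)-1) ≤ S (j:ℕ) := hSmono _ _ (by omega)
      have := lip_aux δ (S ((j:ℕ)-1)) (S (j:ℕ)) h1
      simp only [hρ]; linarith
  -- telescoping
  have htele : ∀ t : ℕ, ∑ j ∈ Finset.univ.filter (fun j : Fin n => k < (j : ℕ) ∧ (j : ℕ) ≤ t), ρ j
      = min δ (S t) := by
    intro t
    induction t with
    | zero =>
      rw [hS0 0 (Nat.zero_le k), min_eq_right hδpos.le]
      apply Finset.sum_eq_zero
      intro i hi
      have := (Finset.mem_filter.mp hi).2
      omega
    | succ t iht =>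
      by_cases hcase : k < t + 1 ∧ t + 1 < n
      · obtain ⟨hc1, hc2⟩ := hcase
        set j0 : Fin n := ⟨t + 1, hc2⟩ with hj0
        have hsplit : Finset.univ.filter (fun j : Fin n => k < (j : ℕ) ∧ (j : ℕ) ≤ t + 1) =
            insert j0 (Finset.univ.filter (fun j : Fin n => k < (j : ℕ) ∧ (j : ℕ) ≤ t)) := by
          ext i
          simp only [Finset.mem_filter, Finset.mem_insert, Finset.mem_univ, true_and]
          constructor
          · rintro ⟨h1, h2⟩
            by_cases hij : (i : ℕ) = t + 1
            · exact Or.inl (Fin.ext hij)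
            · exact Or.inr ⟨h1, by omega⟩
          · rintro (rfl | ⟨h1, h2⟩)
            · exact ⟨hc1, le_refl _⟩
            · exact ⟨h1, by omega⟩
        have hnotin : j0 ∉ Finset.univ.filter (fun j : Fin n => k < (j : ℕ) ∧ (j : ℕ) ≤ t) := by
          simp only [Finset.mem_filter, Finset.mem_univ, true_and, not_and, hj0]
          intro; omega
        rw [hsplit, Finset.sum_insert hnotin, iht]
        have : ρ j0 = min δ (S (t + 1)) - min δ (S t) := by
          simp only [hρ, hj0]
          norm_num
        rw [this]; ring
      · have hSeq : S (t + 1) = S t := by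
          apply Finset.sum_congr _ (fun _ _ => rfl)
          ext i
          simp only [Finset.mem_filter, Finset.mem_univ, true_and]
          have := i.isLt
          omega
        have hFeq : Finset.univ.filter (fun j : Fin n => k < (j : ℕ) ∧ (j : ℕ) ≤ t + 1) =
            Finset.univ.filter (fun j : Fin n => k < (j : ℕ) ∧ (j : ℕ) ≤ t) := by
          ext i
          simp only [Finset.mem_filter, Finset.mem_univ, true_and]
          have := i.isLt
          omega
        rw [hFeq, iht, hSeq]
  -- splitting a sum over a set containing K
  have hsplitB : ∀ (F : Finset (Fin n)), K ∈ F → ∀ f : Fin n → ℚ,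
      ∑ i ∈ F, f i = ∑ i ∈ F.filter (fun i : Fin n => (i : ℕ) < k), f i + f K
        + ∑ i ∈ F.filter (fun i : Fin n => k < (i : ℕ)), f i := by
    intro F hKF f
    rw [← Finset.sum_filter_add_sum_filter_not F (fun i : Fin n => (i : ℕ) < k) f]
    have : F.filter (fun i : Fin n => ¬ (i : ℕ) < k) =
        insert K (F.filter (fun i : Fin n => k < (i : ℕ))) := by
      ext i
      simp only [Finset.mem_filter, Finset.mem_insert, not_lt]
      constructor
      · rintro ⟨h1, h2⟩
        by_cases hik : (i : ℕ) = k
        · exact Or.inl (Fin.ext hik)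
        · exact Or.inr ⟨h1, by omega⟩
      · rintro (rfl | ⟨h1, h2⟩)
        · exact ⟨hKF, le_refl _⟩
        · exact ⟨h1, by omega⟩
    have hnotin : K ∉ F.filter (fun i : Fin n => k < (i : ℕ)) := by
      simp only [Finset.mem_filter, not_and]
      intro; simp [hK]
    rw [this, Finset.sum_insert hnotin]
    ring
  -- bounds on e'
  have he'b : ∀ i, 0 ≤ e' i ∧ e' i ≤ 1 := by
    intro i
    simp only [he']
    split
    · exact he i
    · split
      · norm_num
      · next h1 h2 =>
        have hi : k < (i : ℕ) := by omega
        have := hρbound i hi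
        have := he i
        constructor <;> linarith
  -- agreement on j < k+1
  have he'ag : ∀ j : Fin n, (j : ℕ) < k + 1 → e' j = gr B C (j : ℕ) := by
    intro j hj
    rcases Nat.lt_succ_iff_lt_or_eq.mp hj with h | h
    · simp only [he', if_pos h]; exact hag j h
    · simp [he', h, hg1]
  -- sum comparison
  have hsum : ∑ i, e i ≤ ∑ i, e' i := by
    have h1 := hsplitB Finset.univ (Finset.mem_univ K) e
    have h2 := hsplitB Finset.univ (Finset.mem_univ K) e'
    have hpre : ∑ i ∈ Finset.univ.filter (fun i : Fin n => (i : ℕ) < k), e' i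
        = ∑ i ∈ Finset.univ.filter (fun i : Fin n => (i : ℕ) < k), e i := by
      apply Finset.sum_congr rfl
      intro i hi
      have := (Finset.mem_filter.mp hi).2
      simp only [he', if_pos this]
    have he'K : e' K = 1 := by simp [he', hK]
    have hpost : ∑ i ∈ Finset.univ.filter (fun i : Fin n => k < (i : ℕ)), e' i
        = ∑ i ∈ Finset.univ.filter (fun i : Fin n => k < (i : ℕ)), (e i - ρ i) := by
      apply Finset.sum_congr rfl
      intro i hi
      have := (Finset.mem_filter.mp hi).2
      simp only [he']
      rw [if_neg (by omega), if_neg (by omega)]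
    have hFn : Finset.univ.filter (fun j : Fin n => k < (j : ℕ)) =
        Finset.univ.filter (fun j : Fin n => k < (j : ℕ) ∧ (j : ℕ) ≤ n) := by
      ext i
      simp only [Finset.mem_filter, Finset.mem_univ, true_and]
      have := i.isLt
      omega
    have hρtot : ∑ i ∈ Finset.univ.filter (fun j : Fin n => k < (j : ℕ)), ρ i = min δ (S n) := by
      rw [hFn]; exact htele n
    have hmin : min δ (S n) ≤ δ := min_le_left _ _
    rw [h1, h2, hpre, he'K, hpost, Finset.sum_sub_distrib, hρtot]
    simp only [hδ] at hmin ⊢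
    linarith
  -- feasibility of e'
  have hfe' : ∀ s, ∑ i ∈ B s, e' i ≤ (C s : ℚ) := by
    intro s
    by_cases hKs : K ∈ B s
    · have hsB := hsplitB (B s) hKs e'
      have hsBe := hsplitB (B s) hKs e
      have hpre : ∑ i ∈ (B s).filter (fun i : Fin n => (i : ℕ) < k), e' i
          = ∑ i ∈ (B s).filter (fun i : Fin n => (i : ℕ) < k), e i := by
        apply Finset.sum_congr rfl
        intro i hi
        have := (Finset.mem_filter.mp hi).2
        simp only [he', if_pos this]
      have hpreg : ∑ i ∈ (B s).filter (fun i : Fin n => (i : ℕ) < k), e i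
          = ∑ i ∈ (B s).filter (fun i : Fin n => (i : ℕ) < k), gr B C (i : ℕ) :=
        Finset.sum_congr rfl (fun i hi => hag i (Finset.mem_filter.mp hi).2)
      have he'K : e' K = 1 := by simp [he', hK]
      have hcond := gr_one_cond B C k hg1 s hk hKs
      set J := (B s).filter (fun i : Fin n => k < (i : ℕ)) with hJ
      have hpost : ∑ i ∈ J, e' i = ∑ i ∈ J, (e i - ρ i) := by
        apply Finset.sum_congr rfl
        intro i hi
        have := (Finset.mem_filter.mp hi).2
        simp only [he']
        rw [if_neg (by omega), if_neg (by omega)]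
      rcases J.eq_empty_or_nonempty with hJe | hJne
      · rw [hsB, hpre, hpreg, he'K, hJe]
        simp only [Finset.sum_empty, add_zero]
        exact hcond
      · set tmax : Fin n := J.max' hJne with htmax
        have htJ : tmax ∈ J := J.max'_mem hJne
        have htB : tmax ∈ B s := (Finset.mem_filter.mp htJ).1
        have htk : k < (tmax : ℕ) := (Finset.mem_filter.mp htJ).2
        have hJchar : J = Finset.univ.filter
            (fun i : Fin n => k < (i : ℕ) ∧ (i : ℕ) ≤ (tmax : ℕ)) := by
          ext i
          simp only [hJ, Finset.mem_filter, Finset.mem_univ, true_and]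
          constructor
          · rintro ⟨h1, h2⟩
            exact ⟨h2, J.le_max' i (Finset.mem_filter.mpr ⟨h1, h2⟩)⟩
          · rintro ⟨h1, h2⟩
            refine ⟨hInt s K i tmax ?_ ?_ hKs htB, h1⟩
            · exact Fin.le_def.mpr (by simp [hK]; omega)
            · exact Fin.le_def.mpr h2
        have hsJρ : ∑ i ∈ J, ρ i = min δ (S (tmax : ℕ)) := by
          rw [hJchar]; exact htele (tmax : ℕ)
        have hsJe : ∑ i ∈ J, e i = S (tmax : ℕ) := by
          rw [hJchar]
        rw [hsB, hpre, hpreg, he'K, hpost, Finset.sum_sub_distrib, hsJρ, hsJe]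
        rcases min_cases δ (S (tmax : ℕ)) with ⟨hm, hm2⟩ | ⟨hm, hm2⟩
        · -- min = δ : total equals sum of e over B s
          have := hfe s
          rw [hsBe, hpreg] at this
          rw [hsJe] at this
          simp only [hδ] at hm ⊢
          rw [hm]
          linarith
        · rw [hm]
          have := hSnonneg (tmax : ℕ)
          linarith
    · -- K ∉ B s : pointwise e' ≤ e on B s
      have : ∀ i ∈ B s, e' i ≤ e i := by
        intro i hi
        simp only [he']
        split
        · exact le_refl _
        · split
          · next h1 h2 =>
            exfalso
            exact hKs (by rwa [show K = i from (Fin.ext h2.symm)])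
          · next h1 h2 =>
            have := hρbound i (by omega)
            linarith
      calc ∑ i ∈ B s, e' i ≤ ∑ i ∈ B s, e i := Finset.sum_le_sum this
        _ ≤ (C s : ℚ) := hfe s
  exact ⟨e', he'b, hfe', he'ag, hsum⟩

include hC hInt in
lemma gr_opt (e : Fin n → ℚ) (he : ∀ i, 0 ≤ e i ∧ e i ≤ 1)
    (hfe : ∀ s, ∑ i ∈ B s, e i ≤ (C s : ℚ)) :
    ∑ i, e i ≤ ∑ i : Fin n, gr B C (i : ℕ) := by
  have main : ∀ k : ℕ, ∃ e' : Fin n → ℚ, (∀ i, 0 ≤ e' i ∧ e' i ≤ 1) ∧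
      (∀ s, ∑ i ∈ B s, e' i ≤ (C s : ℚ)) ∧
      (∀ j : Fin n, (j : ℕ) < k → e' j = gr B C (j : ℕ)) ∧ ∑ i, e i ≤ ∑ i, e' i := by
    intro k
    induction k with
    | zero => exact ⟨e, he, hfe, fun j hj => absurd hj (Nat.not_lt_zero _), le_refl _⟩
    | succ k ih =>
      obtain ⟨e', h1, h2, h3, h4⟩ := ih
      by_cases hk : k < n
      · obtain ⟨e'', g1, g2, g3, g4⟩ := exchange B C hC hInt k hk e' h1 h2 h3
        exact ⟨e'', g1, g2, g3, le_trans h4 g4⟩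
      · exact ⟨e', h1, h2, fun j hj => h3 j (by have := j.isLt; omega), h4⟩
  obtain ⟨e', h1, h2, h3, h4⟩ := main n
  calc ∑ i, e i ≤ ∑ i, e' i := h4
    _ = ∑ i : Fin n, gr B C (i : ℕ) := Finset.sum_congr rfl (fun i _ => h3 i i.isLt)

end Young16


open Young16 in
/-- For a single-crossing profile in which, for every `b ≠ a`, at least one
voter prefers `a` to `b`, the LP relaxation of the Young-score integer
program for `a` has an optimal solution that is integral; in particular the
LP relaxation has the same optimal value as the integer program. -/
theorem stmt16 {n m : ℕ} (rank : Fin n → Equiv.Perm (Fin m)) (a : Fin m)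
    (hSC : ∀ x y : Fin m, ∀ i j l : Fin n, i ≤ j → j ≤ l →
      rank i x < rank i y → rank l x < rank l y → rank j x < rank j y)
    (hfeas : ∀ b : Fin m, b ≠ a → ∃ i : Fin n, rank i a < rank i b) :
    ∃ q : ℚ,
      IsLeast {val : ℚ | ∃ d : Fin n → ℚ,
        (∀ i, 0 ≤ d i ∧ d i ≤ 1) ∧
        (∀ b : Fin m, b ≠ a →
          ((maj rank b a : ℤ) : ℚ) + 1 ≤
            ∑ i ∈ Finset.univ.filter (fun i => rank i b < rank i a), d i) ∧
        val = ∑ i, d i} q ∧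
      IsLeast {val : ℚ | ∃ d : Fin n → ℚ,
        (∀ i, d i = 0 ∨ d i = 1) ∧
        (∀ b : Fin m, b ≠ a →
          ((maj rank b a : ℤ) : ℚ) + 1 ≤
            ∑ i ∈ Finset.univ.filter (fun i => rank i b < rank i a), d i) ∧
        val = ∑ i, d i} q := by
  classical
  set ι := {b : Fin m // b ≠ a} with hι
  set B : ι → Finset (Fin n) :=
    fun s => Finset.univ.filter (fun i => rank i s.1 < rank i a) with hB
  set C : ι → ℤ :=
    fun s => ((Finset.univ.filter (fun i => rank i a < rank i s.1)).card : ℤ) - 1 with hC0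
  have hC : ∀ s : ι, (0 : ℤ) ≤ C s := by
    intro s
    obtain ⟨i, hi⟩ := hfeas s.1 s.2
    have : 0 < (Finset.univ.filter (fun i => rank i a < rank i s.1)).card :=
      Finset.card_pos.mpr ⟨i, Finset.mem_filter.mpr ⟨Finset.mem_univ i, hi⟩⟩
    simp only [hC0]
    omega
  have hInt : ∀ s : ι, ∀ i j l : Fin n, i ≤ j → j ≤ l → i ∈ B s → l ∈ B s → j ∈ B s := by
    intro s i j l hij hjl hi hl
    simp only [hB, Finset.mem_filter, Finset.mem_univ, true_and] at hi hl ⊢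
    exact hSC s.1 a i j l hij hjl hi hl
  -- constraint equivalence
  have hmaj : ∀ b : Fin m, ((maj rank b a : ℤ) : ℚ) =
      ((Finset.univ.filter (fun i => rank i b < rank i a)).card : ℚ) -
      ((Finset.univ.filter (fun i => rank i a < rank i b)).card : ℚ) := by
    intro b
    simp only [maj]
    push_cast
    ring
  have hequiv : ∀ (d : Fin n → ℚ) (s : ι),
      (((maj rank s.1 a : ℤ) : ℚ) + 1 ≤
        ∑ i ∈ Finset.univ.filter (fun i => rank i s.1 < rank i a), d i) ↔
      (∑ i ∈ B s, (1 - d i) ≤ (C s : ℚ)) := by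
    intro d s
    have hsum : ∑ i ∈ B s, (1 - d i) =
        ((B s).card : ℚ) - ∑ i ∈ B s, d i := by
      rw [Finset.sum_sub_distrib, Finset.sum_const, nsmul_eq_mul, mul_one]
    have hBcard : ((B s).card : ℚ) =
        ((Finset.univ.filter (fun i => rank i s.1 < rank i a)).card : ℚ) := by rw [hB]
    have hCval : (C s : ℚ) =
        ((Finset.univ.filter (fun i => rank i a < rank i s.1)).card : ℚ) - 1 := by
      simp only [hC0]; push_cast; ring
    have hBsum : ∑ i ∈ B s, d i =
        ∑ i ∈ Finset.univ.filter (fun i => rank i s.1 < rank i a), d i := by rw [hB]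
    rw [hsum, hCval, hBcard, hBsum, hmaj s.1]
    constructor <;> intro h <;> linarith
  set g : Fin n → ℚ := fun i => gr B C (i : ℕ) with hg
  set dstar : Fin n → ℚ := fun i => 1 - g i with hdstar
  have hg01 : ∀ i : Fin n, g i = 0 ∨ g i = 1 := fun i => gr_zero_one B C (i : ℕ)
  have hgfeas : ∀ s : ι, ∑ i ∈ B s, g i ≤ (C s : ℚ) := fun s => gr_feasible B C hC s
  set q : ℚ := ∑ i, dstar i with hq
  -- dstar satisfies the stated constraints
  have hdstarcon : ∀ b : Fin m, b ≠ a →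
      ((maj rank b a : ℤ) : ℚ) + 1 ≤
        ∑ i ∈ Finset.univ.filter (fun i => rank i b < rank i a), dstar i := by
    intro b hb
    have := (hequiv dstar ⟨b, hb⟩).mpr
    apply this
    have : ∀ i : Fin n, 1 - dstar i = g i := by intro i; simp [hdstar]
    calc ∑ i ∈ B ⟨b, hb⟩, (1 - dstar i) = ∑ i ∈ B ⟨b, hb⟩, g i :=
          Finset.sum_congr rfl (fun i _ => this i)
      _ ≤ (C ⟨b, hb⟩ : ℚ) := hgfeas ⟨b, hb⟩
  -- any feasible fractional d has sum ≥ q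
  have hlb : ∀ d : Fin n → ℚ, (∀ i, 0 ≤ d i ∧ d i ≤ 1) →
      (∀ b : Fin m, b ≠ a →
        ((maj rank b a : ℤ) : ℚ) + 1 ≤
          ∑ i ∈ Finset.univ.filter (fun i => rank i b < rank i a), d i) →
      q ≤ ∑ i, d i := by
    intro d hd hcon
    set e : Fin n → ℚ := fun i => 1 - d i with he
    have heb : ∀ i, 0 ≤ e i ∧ e i ≤ 1 := by
      intro i; have := hd i; constructor <;> simp [he] <;> linarith
    have hef : ∀ s : ι, ∑ i ∈ B s, e i ≤ (C s : ℚ) := by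
      intro s
      have := (hequiv d s).mp (hcon s.1 s.2)
      simpa [he] using this
    have hopt := gr_opt B C hC hInt e heb hef
    have h1 : ∑ i, e i = (n : ℚ) - ∑ i, d i := by
      simp only [he]
      rw [Finset.sum_sub_distrib, Finset.sum_const, Finset.card_univ, Fintype.card_fin,
        nsmul_eq_mul, mul_one]
    have h2 : q = (n : ℚ) - ∑ i, g i := by
      simp only [hq, hdstar]
      rw [Finset.sum_sub_distrib, Finset.sum_const, Finset.card_univ, Fintype.card_fin,
        nsmul_eq_mul, mul_one]
    have h3 : ∑ i, g i = ∑ i : Fin n, gr B C (i : ℕ) := rfl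
    rw [h2]
    rw [h3] at *
    linarith [hopt, h1.symm ▸ hopt]
  refine ⟨q, ⟨⟨dstar, ?_, hdstarcon, rfl⟩, ?_⟩, ⟨⟨dstar, ?_, hdstarcon, rfl⟩, ?_⟩⟩
  · intro i
    rcases hg01 i with h | h <;> simp [hdstar, h]
  · rintro val ⟨d, hd1, hd2, rfl⟩
    exact hlb d hd1 hd2
  · intro i
    rcases hg01 i with h | h <;> simp [hdstar, h]
  · rintro val ⟨d, hd1, hd2, rfl⟩
    apply hlb d _ hd2
    intro i
    rcases hd1 i with h | h <;> simp [h]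
end

section
/- Let A be a finite set, ◁ a linear order on A, and ≻ a linear order on A with ≻-maximum element p (the peak). Then ≻ is single-peaked with respect to ◁ (i.e., for all a,b ∈ A, if p ◁ b ◁ a or a ◁ b ◁ p then b ≻ a) if and only if for every a ∈ A the top-initial segment {x ∈ A : x ≻ a or x = a} is an interval of ◁ (i.e., whenever u ◁ v ◁ w with u and w in the segment, v is also in the segment). -/
/-- A linear order `≻` on a finite set `A` (encoded by the bijective rank
function `rank : A ≃ Fin m`, rank `0` most preferred, so
`b ≻ a ↔ rank b < rank a`, and the peak is the element of rank `0`) is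
single-peaked with respect to an axis `◁` (encoded by the bijective
position function `pos`, so `a ◁ b ↔ pos a < pos b`) if and only if every
top-initial segment `{x : x ≽ a} = {x : rank x ≤ rank a}` is an interval of
the axis. -/
theorem stmt17 {A : Type*} {m : ℕ} (hm : 0 < m)
    (rank : A ≃ Fin m) (pos : A ≃ Fin m) :
    (∀ a b : A,
        ((pos (rank.symm ⟨0, hm⟩) < pos b ∧ pos b < pos a) ∨
          (pos a < pos b ∧ pos b < pos (rank.symm ⟨0, hm⟩))) →
        rank b < rank a)
    ↔ (∀ a u v w : A, pos u < pos v → pos v < pos w →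
        rank u ≤ rank a → rank w ≤ rank a → rank v ≤ rank a) := by
  set p := rank.symm ⟨0, hm⟩ with hp
  have hrp : rank p = ⟨0, hm⟩ := rank.apply_symm_apply _
  have hple : ∀ x : A, rank p ≤ rank x := by
    intro x; rw [hrp, Fin.le_def]; exact Nat.zero_le _
  constructor
  · intro hsp a u v w huv hvw hu hw
    rcases lt_trichotomy (pos p) (pos v) with h | h | h
    · exact le_of_lt (lt_of_lt_of_le (hsp w v (Or.inl ⟨h, hvw⟩)) hw)
    · have : p = v := pos.injective h
      exact this ▸ hple a
    · exact le_of_lt (lt_of_lt_of_le (hsp u v (Or.inr ⟨huv, h⟩)) hu)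
  · intro hI a b hb
    have hne : rank b ≠ rank a := by
      intro h
      have : b = a := rank.injective h
      subst this
      rcases hb with ⟨_, h2⟩ | ⟨h1, _⟩ <;> exact lt_irrefl _ ‹_›
    rcases hb with ⟨h1, h2⟩ | ⟨h1, h2⟩
    · exact lt_of_le_of_ne (hI a p b a h1 h2 (hple a) le_rfl) hne
    · exact lt_of_le_of_ne (hI a a b p h1 h2 le_rfl (hple a)) hne
end

section
/- Let A be a finite set, ◁ a linear order on A, and ≻ a linear order on A that is single-peaked with respect to ◁. Then for every nonempty subset W ⊆ A, the ≻-least preferred element of W is either the ◁-minimum or the ◁-maximum of W. -/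
/-- If a linear order `≻` on a finite set `A` (encoded by the bijective
rank function `rank : A ≃ Fin m`, rank `0` most preferred, so
`b ≻ a ↔ rank b < rank a`, with peak the element of rank `0`) is
single-peaked with respect to an axis `◁` (encoded by the bijective
position function `pos`, so `a ◁ b ↔ pos a < pos b`), then for every
nonempty subset `W` of `A`, the `≻`-least preferred element of `W` is
either the `◁`-minimum or the `◁`-maximum of `W`. -/
theorem stmt18 {A : Type*} {m : ℕ} (hm : 0 < m)
    (rank : A ≃ Fin m) (pos : A ≃ Fin m)
    (hSP : ∀ a b : A,
      ((pos (rank.symm ⟨0, hm⟩) < pos b ∧ pos b < pos a) ∨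
        (pos a < pos b ∧ pos b < pos (rank.symm ⟨0, hm⟩))) →
      rank b < rank a)
    (W : Finset A) (l : A) (hlW : l ∈ W)
    (hworst : ∀ c ∈ W, rank c ≤ rank l) :
    (∀ c ∈ W, pos l ≤ pos c) ∨ (∀ c ∈ W, pos c ≤ pos l) := by
  set p := rank.symm ⟨0, hm⟩ with hp
  by_contra h
  push_neg at h
  obtain ⟨⟨c1, hc1W, hc1⟩, c2, hc2W, hc2⟩ := h
  rcases lt_trichotomy (pos p) (pos l) with hpl | hpl | hpl
  · exact absurd (hworst c2 hc2W) (not_le.mpr (hSP c2 l (Or.inl ⟨hpl, hc2⟩)))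
  · have : p = l := pos.injective (Fin.ext (by omega))
    have h0 : rank l = ⟨0, hm⟩ := by rw [← this]; simp [hp]
    have := hworst c1 hc1W
    rw [h0] at this
    have : rank c1 = ⟨0, hm⟩ := le_antisymm this (by exact Fin.mk_le_mk.mpr (Nat.zero_le _))
    have : c1 = l := by
      apply rank.injective; rw [this, h0]
    exact absurd hc1 (by rw [this]; exact lt_irrefl _)
  · exact absurd (hworst c1 hc1W) (not_le.mpr (hSP c1 l (Or.inr ⟨hc1, hpl⟩)))
end

section
/- Let P = (≻_1,…,≻_n) be a profile of linear orders over a finite set A with n odd, and suppose P is single-crossing with respect to the voter ordering 1,…,n (for every pair x,y ∈ A, the set {i : x ≻_i y} is an interval of {1,…,n}). Let c be the most-preferred alternative of the median voter, voter (n+1)/2. Then c is the Condorcet winner of P: for every b ≠ c, |{i : c ≻_i b}| > |{i : b ≻_i c}|. -/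
/-- The most-preferred alternative of the median voter (voter `(n+1)/2` in
1-indexed terms, i.e. the voter with 0-indexed position `n / 2` for odd
`n`).  Voter `i`'s linear order is encoded by the bijective rank function
`rank i` (rank `0` most preferred, so `b ≻_i a ↔ rank i b < rank i a`). -/
def medianPeak {n m : ℕ} (hn : 0 < n) (hm : 0 < m)
    (rank : Fin n → Equiv.Perm (Fin m)) : Fin m :=
  (rank ⟨n / 2, Nat.div_lt_self hn one_lt_two⟩).symm ⟨0, hm⟩

/-- In a profile of linear orders with an odd number `n` of voters that is
single-crossing with respect to the voter ordering `1,…,n`, the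
most-preferred alternative `c` of the median voter is the Condorcet winner:
for every `b ≠ c`, strictly more voters prefer `c` to `b` than `b` to `c`. -/
theorem stmt19 {n m : ℕ} (hn : Odd n) (hm : 0 < m)
    (rank : Fin n → Equiv.Perm (Fin m))
    (hSC : ∀ x y : Fin m, ∀ i j l : Fin n, i ≤ j → j ≤ l →
      rank i x < rank i y → rank l x < rank l y → rank j x < rank j y)
    (b : Fin m) (hb : b ≠ medianPeak hn.pos hm rank) :
    (Finset.univ.filter fun i =>
        rank i b < rank i (medianPeak hn.pos hm rank)).card <
      (Finset.univ.filter fun i =>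
        rank i (medianPeak hn.pos hm rank) < rank i b).card := by
  set c := medianPeak hn.pos hm rank with hc
  set med : Fin n := ⟨n / 2, Nat.div_lt_self hn.pos one_lt_two⟩ with hmed
  have hrmc : rank med c = ⟨0, hm⟩ := by
    rw [hc, medianPeak]; exact (rank med).apply_symm_apply _
  -- the median voter prefers c to b
  have hmedpref : rank med c < rank med b := by
    refine lt_of_le_of_ne ?_ ?_
    · rw [hrmc]; simp [Fin.le_def]
    · intro h
      exact hb ((rank med).injective h.symm)
  set B := Finset.univ.filter fun i => rank i b < rank i c with hB
  set C := Finset.univ.filter fun i => rank i c < rank i b with hC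
  have hmedB : med ∉ B := by
    simp only [hB, Finset.mem_filter]
    rintro ⟨-, h⟩
    exact absurd hmedpref (not_lt.2 h.le)
  -- B lies entirely on one side of med
  have hside : (∀ i ∈ B, (i : ℕ) < med) ∨ (∀ i ∈ B, (med : ℕ) < i) := by
    by_cases h : ∃ i ∈ B, (med : ℕ) < i
    · obtain ⟨i, hiB, hi⟩ := h
      right
      intro j hjB
      by_contra hj
      have hjm : (j : ℕ) < med := by
        rcases lt_or_eq_of_le (not_lt.1 hj) with h' | h'
        · exact h'
        · exact absurd (Fin.ext h' ▸ hjB) hmedB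
      have hjB' := (Finset.mem_filter.1 hjB).2
      have hiB' := (Finset.mem_filter.1 hiB).2
      have := hSC b c j med i (le_of_lt hjm) (le_of_lt hi) hjB' hiB'
      exact absurd hmedpref (not_lt.2 this.le)
    · left
      intro i hiB
      push_neg at h
      rcases lt_or_eq_of_le (h i hiB) with h' | h'
      · exact h'
      · exact absurd ((Fin.ext h'.symm.symm : i = med) ▸ hiB) hmedB
  -- hence B has at most n/2 elements
  have hBcard : B.card ≤ n / 2 := by
    rcases hside with hs | hs
    · have : B ⊆ Finset.Iio med := fun i hi => Finset.mem_Iio.2 (hs i hi)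
      calc B.card ≤ (Finset.Iio med).card := Finset.card_le_card this
        _ = n / 2 := by rw [Fin.card_Iio]
    · have : B ⊆ Finset.Ioi med := fun i hi => Finset.mem_Ioi.2 (hs i hi)
      have hcard : (Finset.Ioi med).card = n - 1 - (n / 2) := by
        exact Fin.card_Ioi med
      calc B.card ≤ (Finset.Ioi med).card := Finset.card_le_card this
        _ ≤ n / 2 := by
            rw [hcard]
            obtain ⟨k, hk⟩ := hn
            omega
  -- B and C partition the voters
  have hBC : B.card + C.card = n := by
    have hCcompl : C = Bᶜ := by
      ext i
      simp only [hB, hC, Finset.mem_filter, Finset.mem_compl, Finset.mem_univ,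
        true_and]
      constructor
      · intro h h'
        exact absurd h (not_lt.2 h'.le)
      · intro h
        refine lt_of_le_of_ne (not_lt.1 h) ?_
        intro heq
        exact hb ((rank i).injective heq).symm
    rw [hCcompl, Finset.card_compl]
    have : B.card ≤ n := by
      simpa using Finset.card_le_card (Finset.subset_univ B)
    simp [Fintype.card_fin]
    omega
  obtain ⟨k, hk⟩ := hn
  omega
end
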